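/- arXiv:1901.02521 — 9 statements merged into one kernel-verified Lean document; each statement's English description precedes it below -/
import Mathlib

section
/- For all 1 ≤ i, k ≤ n the curvature tensor satisfies: R(u_i, u_k)u_k = 0, R(u_i, v_k)v_k = −(3λ/(4σ_k)) δ_{ik} u_k, R(u_i, z)z = (λ²/(4σ_i²)) u_i, R(v_i, u_k)u_k = −(3λ/(4σ_k)) δ_{ik} v_k, R(v_i, v_k)v_k = 0, R(v_i, z)z = (λ²/(4σ_i²)) v_i, R(z, u_k)u_k = (λ/(4σ_k)) z, and R(z, v_k)v_k = (λ/(4σ_k)) z. -/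
set_option maxHeartbeats 4000000 in
theorem stmt_1
    {H : Type*} [AddCommGroup H] [Module ℝ H]
    (n : ℕ) (hn : 1 ≤ n)
    (u v : Fin n → H) (z : H)
    (b : Module.Basis (Fin n ⊕ Fin n ⊕ Unit) ℝ H)
    (hbu : ∀ i, b (Sum.inl i) = u i)
    (hbv : ∀ i, b (Sum.inr (Sum.inl i)) = v i)
    (hbz : b (Sum.inr (Sum.inr ())) = z)
    (bracket : H →ₗ[ℝ] H →ₗ[ℝ] H)
    (hbskew : ∀ X Y : H, bracket X Y = - bracket Y X)
    (hbuv : ∀ i j, bracket (u i) (v j) = if i = j then z else 0)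
    (hbuu : ∀ i j, bracket (u i) (u j) = 0)
    (hbvv : ∀ i j, bracket (v i) (v j) = 0)
    (hbuz : ∀ i, bracket (u i) z = 0)
    (hbvz : ∀ i, bracket (v i) z = 0)
    (lam : ℝ) (hlam : 0 < lam)
    (sigma : Fin n → ℝ) (hsigma : ∀ i, 0 < sigma i)
    (ip : H →ₗ[ℝ] H →ₗ[ℝ] ℝ)
    (hipsymm : ∀ X Y : H, ip X Y = ip Y X)
    (hippos : ∀ X : H, X ≠ 0 → 0 < ip X X)
    (hipuu : ∀ i j, ip (u i) (u j) = if i = j then sigma i else 0)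
    (hipvv : ∀ i j, ip (v i) (v j) = if i = j then sigma i else 0)
    (hipuv : ∀ i j, ip (u i) (v j) = 0)
    (hipuz : ∀ i, ip (u i) z = 0)
    (hipvz : ∀ i, ip (v i) z = 0)
    (hipzz : ip z z = lam)
    (nabla : H →ₗ[ℝ] H →ₗ[ℝ] H)
    (hKoszul : ∀ U V X : H, 2 * ip (nabla U V) X =
      ip (bracket U V) X - ip (bracket V X) U + ip (bracket X U) V)
    (R : H → H → H → H)
    (hR : ∀ U V X : H, R U V X =
      nabla U (nabla V X) - nabla V (nabla U X) - nabla (bracket U V) X)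
    :
    ∀ i k : Fin n,
      R (u i) (u k) (u k) = 0 ∧
      R (u i) (v k) (v k) = (-(3 * lam / (4 * sigma k)) * (if i = k then 1 else 0)) • u k ∧
      R (u i) z z = (lam ^ 2 / (4 * (sigma i) ^ 2)) • u i ∧
      R (v i) (u k) (u k) = (-(3 * lam / (4 * sigma k)) * (if i = k then 1 else 0)) • v k ∧
      R (v i) (v k) (v k) = 0 ∧
      R (v i) z z = (lam ^ 2 / (4 * (sigma i) ^ 2)) • v i ∧
      R z (u k) (u k) = (lam / (4 * sigma k)) • z ∧
      R z (v k) (v k) = (lam / (4 * sigma k)) • z := by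
  -- derived inner product facts
  have hipvu : ∀ i j, ip (v i) (u j) = 0 := fun i j => by rw [hipsymm]; exact hipuv j i
  have hipzu : ∀ i, ip z (u i) = 0 := fun i => by rw [hipsymm]; exact hipuz i
  have hipzv : ∀ i, ip z (v i) = 0 := fun i => by rw [hipsymm]; exact hipvz i
  -- derived bracket facts
  have hbvu : ∀ i j, bracket (v i) (u j) = if j = i then -z else 0 := by
    intro i j; rw [hbskew, hbuv]; split <;> simp
  have hbzu : ∀ i, bracket z (u i) = 0 := fun i => by rw [hbskew, hbuz, neg_zero]
  have hbzv : ∀ i, bracket z (v i) = 0 := fun i => by rw [hbskew, hbvz, neg_zero]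
  have hbzz : bracket z z = 0 := by
    have h2 : (2:ℝ) • bracket z z = 0 := by
      rw [two_smul]; nth_rewrite 1 [hbskew z z]; abel
    simpa using (smul_eq_zero.mp h2).resolve_left (by norm_num)
  -- ite push lemmas
  have ipiteL : ∀ (P : Prop) [Decidable P] (X Y W : H),
      ip (if P then X else Y) W = if P then ip X W else ip Y W := by
    intro P _ X Y W; split <;> rfl
  have niteL : ∀ (P : Prop) [Decidable P] (X Y W : H),
      nabla (if P then X else Y) W = if P then nabla X W else nabla Y W := by
    intro P _ X Y W; split <;> rfl
  -- nondegeneracy: two vectors with same pairings against the basis are equal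
  have key : ∀ A B : H, (∀ w, ip A (b w) = ip B (b w)) → A = B := by
    intro A B h
    have hAB : ip A = ip B := b.ext h
    by_contra hne
    have h0 : A - B ≠ 0 := sub_ne_zero.mpr hne
    have hz : ip (A - B) (A - B) = 0 := by
      have hm : ip (A - B) = ip A - ip B := map_sub ip A B
      rw [hm, LinearMap.sub_apply, hAB, sub_self]
    exact absurd hz (ne_of_gt (hippos _ h0))
  -- connection values
  have nuu : ∀ i j, nabla (u i) (u j) = 0 := by
    intro i j
    apply key; intro w
    have hK := hKoszul (u i) (u j) (b w)
    obtain (k | k | _) := w <;>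
      simp only [hbu, hbv, hbz, hbuu, hbvv, hbuv, hbvu, hbuz, hbvz, hbzu, hbzv, hbzz,
        map_zero, map_neg, map_smul, LinearMap.zero_apply, LinearMap.neg_apply,
        LinearMap.smul_apply, smul_eq_mul, ipiteL,
        hipuu, hipvv, hipuv, hipvu, hipuz, hipvz, hipzu, hipzv, hipzz,
        ite_self, mul_zero, zero_mul, mul_one, one_mul, add_zero, zero_add,
        sub_zero, zero_sub, neg_zero, neg_neg, sub_self] at hK ⊢ <;>
      (try split_ifs at hK ⊢) <;>
      first
        | linarith
        | exact absurd rfl (by assumption)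
        | (subst_vars; first
            | linarith
            | exact absurd rfl (by assumption)
            | (have h' : lam / (2 * sigma i) * sigma i = lam / 2 := by
                 field_simp
               linarith)
            | (have h' : -(lam / (2 * sigma i)) * sigma i = -(lam / 2) := by
                 field_simp; ring
               linarith))
        | (have h' : lam / (2 * sigma i) * sigma i = lam / 2 := by
             field_simp
           linarith)
        | (have h' : -(lam / (2 * sigma i)) * sigma i = -(lam / 2) := by
             field_simp; ring
           linarith)
  have nvv : ∀ i j, nabla (v i) (v j) = 0 := by
    intro i j
    apply key; intro w
    have hK := hKoszul (v i) (v j) (b w)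
    obtain (k | k | _) := w <;>
      simp only [hbu, hbv, hbz, hbuu, hbvv, hbuv, hbvu, hbuz, hbvz, hbzu, hbzv, hbzz,
        map_zero, map_neg, map_smul, LinearMap.zero_apply, LinearMap.neg_apply,
        LinearMap.smul_apply, smul_eq_mul, ipiteL,
        hipuu, hipvv, hipuv, hipvu, hipuz, hipvz, hipzu, hipzv, hipzz,
        ite_self, mul_zero, zero_mul, mul_one, one_mul, add_zero, zero_add,
        sub_zero, zero_sub, neg_zero, neg_neg, sub_self] at hK ⊢ <;>
      (try split_ifs at hK ⊢) <;>
      first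
        | linarith
        | exact absurd rfl (by assumption)
        | (subst_vars; first
            | linarith
            | exact absurd rfl (by assumption)
            | (have h' : lam / (2 * sigma i) * sigma i = lam / 2 := by
                 field_simp
               linarith)
            | (have h' : -(lam / (2 * sigma i)) * sigma i = -(lam / 2) := by
                 field_simp; ring
               linarith))
        | (have h' : lam / (2 * sigma i) * sigma i = lam / 2 := by
             field_simp
           linarith)
        | (have h' : -(lam / (2 * sigma i)) * sigma i = -(lam / 2) := by
             field_simp; ring
           linarith)
  have nuv : ∀ i j, nabla (u i) (v j) = ((if i = j then (1:ℝ) else 0) / 2) • z := by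
    intro i j
    apply key; intro w
    have hK := hKoszul (u i) (v j) (b w)
    obtain (k | k | _) := w <;>
      simp only [hbu, hbv, hbz, hbuu, hbvv, hbuv, hbvu, hbuz, hbvz, hbzu, hbzv, hbzz,
        map_zero, map_neg, map_smul, LinearMap.zero_apply, LinearMap.neg_apply,
        LinearMap.smul_apply, smul_eq_mul, ipiteL,
        hipuu, hipvv, hipuv, hipvu, hipuz, hipvz, hipzu, hipzv, hipzz,
        ite_self, mul_zero, zero_mul, mul_one, one_mul, add_zero, zero_add,
        sub_zero, zero_sub, neg_zero, neg_neg, sub_self] at hK ⊢ <;>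
      (try split_ifs at hK ⊢) <;>
      first
        | linarith
        | exact absurd rfl (by assumption)
        | (subst_vars; first
            | linarith
            | exact absurd rfl (by assumption)
            | (have h' : lam / (2 * sigma i) * sigma i = lam / 2 := by
                 field_simp
               linarith)
            | (have h' : -(lam / (2 * sigma i)) * sigma i = -(lam / 2) := by
                 field_simp; ring
               linarith))
        | (have h' : lam / (2 * sigma i) * sigma i = lam / 2 := by
             field_simp
           linarith)
        | (have h' : -(lam / (2 * sigma i)) * sigma i = -(lam / 2) := by
             field_simp; ring
           linarith)
  have nvu : ∀ i j, nabla (v j) (u i) = (-(if i = j then (1:ℝ) else 0) / 2) • z := by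
    intro i j
    apply key; intro w
    have hK := hKoszul (v j) (u i) (b w)
    obtain (k | k | _) := w <;>
      simp only [hbu, hbv, hbz, hbuu, hbvv, hbuv, hbvu, hbuz, hbvz, hbzu, hbzv, hbzz,
        map_zero, map_neg, map_smul, LinearMap.zero_apply, LinearMap.neg_apply,
        LinearMap.smul_apply, smul_eq_mul, ipiteL,
        hipuu, hipvv, hipuv, hipvu, hipuz, hipvz, hipzu, hipzv, hipzz,
        ite_self, mul_zero, zero_mul, mul_one, one_mul, add_zero, zero_add,
        sub_zero, zero_sub, neg_zero, neg_neg, sub_self] at hK ⊢ <;>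
      (try split_ifs at hK ⊢) <;>
      first
        | linarith
        | exact absurd rfl (by assumption)
        | (subst_vars; first
            | linarith
            | exact absurd rfl (by assumption)
            | (have h' : lam / (2 * sigma i) * sigma i = lam / 2 := by
                 field_simp
               linarith)
            | (have h' : -(lam / (2 * sigma i)) * sigma i = -(lam / 2) := by
                 field_simp; ring
               linarith))
        | (have h' : lam / (2 * sigma i) * sigma i = lam / 2 := by
             field_simp
           linarith)
        | (have h' : -(lam / (2 * sigma i)) * sigma i = -(lam / 2) := by
             field_simp; ring
           linarith)
  have nuz : ∀ i, nabla (u i) z = (-(lam / (2 * sigma i))) • v i := by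
    intro i
    apply key; intro w
    have hK := hKoszul (u i) z (b w)
    have hσ := (hsigma i).ne'
    obtain (k | k | _) := w <;>
      simp only [hbu, hbv, hbz, hbuu, hbvv, hbuv, hbvu, hbuz, hbvz, hbzu, hbzv, hbzz,
        map_zero, map_neg, map_smul, LinearMap.zero_apply, LinearMap.neg_apply,
        LinearMap.smul_apply, smul_eq_mul, ipiteL,
        hipuu, hipvv, hipuv, hipvu, hipuz, hipvz, hipzu, hipzv, hipzz,
        ite_self, mul_zero, zero_mul, mul_one, one_mul, add_zero, zero_add,
        sub_zero, zero_sub, neg_zero, neg_neg, sub_self] at hK ⊢ <;>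
      (try split_ifs at hK ⊢) <;>
      first
        | linarith
        | exact absurd rfl (by assumption)
        | (subst_vars; first
            | linarith
            | exact absurd rfl (by assumption)
            | (have h' : lam / (2 * sigma i) * sigma i = lam / 2 := by
                 field_simp
               linarith)
            | (have h' : -(lam / (2 * sigma i)) * sigma i = -(lam / 2) := by
                 field_simp; ring
               linarith))
        | (have h' : lam / (2 * sigma i) * sigma i = lam / 2 := by
             field_simp
           linarith)
        | (have h' : -(lam / (2 * sigma i)) * sigma i = -(lam / 2) := by
             field_simp; ring
           linarith)
  have nzu : ∀ i, nabla z (u i) = (-(lam / (2 * sigma i))) • v i := by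
    intro i
    apply key; intro w
    have hK := hKoszul z (u i) (b w)
    have hσ := (hsigma i).ne'
    obtain (k | k | _) := w <;>
      simp only [hbu, hbv, hbz, hbuu, hbvv, hbuv, hbvu, hbuz, hbvz, hbzu, hbzv, hbzz,
        map_zero, map_neg, map_smul, LinearMap.zero_apply, LinearMap.neg_apply,
        LinearMap.smul_apply, smul_eq_mul, ipiteL,
        hipuu, hipvv, hipuv, hipvu, hipuz, hipvz, hipzu, hipzv, hipzz,
        ite_self, mul_zero, zero_mul, mul_one, one_mul, add_zero, zero_add,
        sub_zero, zero_sub, neg_zero, neg_neg, sub_self] at hK ⊢ <;>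
      (try split_ifs at hK ⊢) <;>
      first
        | linarith
        | exact absurd rfl (by assumption)
        | (subst_vars; first
            | linarith
            | exact absurd rfl (by assumption)
            | (have h' : lam / (2 * sigma i) * sigma i = lam / 2 := by
                 field_simp
               linarith)
            | (have h' : -(lam / (2 * sigma i)) * sigma i = -(lam / 2) := by
                 field_simp; ring
               linarith))
        | (have h' : lam / (2 * sigma i) * sigma i = lam / 2 := by
             field_simp
           linarith)
        | (have h' : -(lam / (2 * sigma i)) * sigma i = -(lam / 2) := by
             field_simp; ring
           linarith)
  have nvz : ∀ i, nabla (v i) z = (lam / (2 * sigma i)) • u i := by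
    intro i
    apply key; intro w
    have hK := hKoszul (v i) z (b w)
    have hσ := (hsigma i).ne'
    obtain (k | k | _) := w <;>
      simp only [hbu, hbv, hbz, hbuu, hbvv, hbuv, hbvu, hbuz, hbvz, hbzu, hbzv, hbzz,
        map_zero, map_neg, map_smul, LinearMap.zero_apply, LinearMap.neg_apply,
        LinearMap.smul_apply, smul_eq_mul, ipiteL,
        hipuu, hipvv, hipuv, hipvu, hipuz, hipvz, hipzu, hipzv, hipzz,
        ite_self, mul_zero, zero_mul, mul_one, one_mul, add_zero, zero_add,
        sub_zero, zero_sub, neg_zero, neg_neg, sub_self] at hK ⊢ <;>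
      (try split_ifs at hK ⊢) <;>
      first
        | linarith
        | exact absurd rfl (by assumption)
        | (subst_vars; first
            | linarith
            | exact absurd rfl (by assumption)
            | (have h' : lam / (2 * sigma i) * sigma i = lam / 2 := by
                 field_simp
               linarith)
            | (have h' : -(lam / (2 * sigma i)) * sigma i = -(lam / 2) := by
                 field_simp; ring
               linarith))
        | (have h' : lam / (2 * sigma i) * sigma i = lam / 2 := by
             field_simp
           linarith)
        | (have h' : -(lam / (2 * sigma i)) * sigma i = -(lam / 2) := by
             field_simp; ring
           linarith)
  have nzv : ∀ i, nabla z (v i) = (lam / (2 * sigma i)) • u i := by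
    intro i
    apply key; intro w
    have hK := hKoszul z (v i) (b w)
    have hσ := (hsigma i).ne'
    obtain (k | k | _) := w <;>
      simp only [hbu, hbv, hbz, hbuu, hbvv, hbuv, hbvu, hbuz, hbvz, hbzu, hbzv, hbzz,
        map_zero, map_neg, map_smul, LinearMap.zero_apply, LinearMap.neg_apply,
        LinearMap.smul_apply, smul_eq_mul, ipiteL,
        hipuu, hipvv, hipuv, hipvu, hipuz, hipvz, hipzu, hipzv, hipzz,
        ite_self, mul_zero, zero_mul, mul_one, one_mul, add_zero, zero_add,
        sub_zero, zero_sub, neg_zero, neg_neg, sub_self] at hK ⊢ <;>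
      (try split_ifs at hK ⊢) <;>
      first
        | linarith
        | exact absurd rfl (by assumption)
        | (subst_vars; first
            | linarith
            | exact absurd rfl (by assumption)
            | (have h' : lam / (2 * sigma i) * sigma i = lam / 2 := by
                 field_simp
               linarith)
            | (have h' : -(lam / (2 * sigma i)) * sigma i = -(lam / 2) := by
                 field_simp; ring
               linarith))
        | (have h' : lam / (2 * sigma i) * sigma i = lam / 2 := by
             field_simp
           linarith)
        | (have h' : -(lam / (2 * sigma i)) * sigma i = -(lam / 2) := by
             field_simp; ring
           linarith)
  have nzz : nabla z z = 0 := by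
    apply key; intro w
    have hK := hKoszul z z (b w)
    obtain (k | k | _) := w <;>
      simp only [hbu, hbv, hbz, hbuu, hbvv, hbuv, hbvu, hbuz, hbvz, hbzu, hbzv, hbzz,
        map_zero, map_neg, map_smul, LinearMap.zero_apply, LinearMap.neg_apply,
        LinearMap.smul_apply, smul_eq_mul, ipiteL,
        hipuu, hipvv, hipuv, hipvu, hipuz, hipvz, hipzu, hipzv, hipzz,
        ite_self, mul_zero, zero_mul, mul_one, one_mul, add_zero, zero_add,
        sub_zero, zero_sub, neg_zero, neg_neg, sub_self] at hK ⊢ <;>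
      (try split_ifs at hK ⊢) <;>
      first
        | linarith
        | exact absurd rfl (by assumption)
        | (subst_vars; first
            | linarith
            | exact absurd rfl (by assumption)
            | (have h' : lam / (2 * sigma i) * sigma i = lam / 2 := by
                 field_simp
               linarith)
            | (have h' : -(lam / (2 * sigma i)) * sigma i = -(lam / 2) := by
                 field_simp; ring
               linarith))
        | (have h' : lam / (2 * sigma i) * sigma i = lam / 2 := by
             field_simp
           linarith)
        | (have h' : -(lam / (2 * sigma i)) * sigma i = -(lam / 2) := by
             field_simp; ring
           linarith)
  -- the curvature computations
  intro i k
  refine ⟨?_, ?_, ?_, ?_, ?_, ?_, ?_, ?_⟩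
  · rw [hR]
    simp [nuu, hbuu]
  · rw [hR, nvv, hbuv, nuv]
    simp only [map_zero, map_smul, map_neg, niteL, nuz, nzu, nvz, nzv,
      LinearMap.zero_apply, LinearMap.neg_apply]
    split_ifs <;> (try subst_vars) <;>
      first
        | exact absurd rfl (by assumption)
        | (match_scalars <;> (try simp only [if_true]) <;> first | ring | (field_simp; ring))
        | simp
  · rw [hR, nzz, nuz]
    simp only [map_zero, map_smul, map_neg, nzv, nzu, hbuz,
      LinearMap.zero_apply, LinearMap.neg_apply]
    match_scalars <;> (try simp only [if_true]) <;> first | ring | (field_simp; ring)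
  · rw [hR, nuu, nvu, hbvu]
    simp only [map_zero, map_smul, map_neg, niteL, nzu, nuz,
      LinearMap.zero_apply, LinearMap.neg_apply]
    split_ifs <;> (try subst_vars) <;>
      first
        | exact absurd rfl (by assumption)
        | (match_scalars <;> (try simp only [if_true]) <;> first | ring | (field_simp; ring))
        | simp
  · rw [hR]
    simp [nvv, hbvv]
  · rw [hR, nzz, nvz]
    simp only [map_zero, map_smul, map_neg, nzu, nzv, hbvz,
      LinearMap.zero_apply, LinearMap.neg_apply]
    match_scalars <;> (try simp only [if_true]) <;> first | ring | (field_simp; ring)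
  · rw [hR, nuu, nzu, hbzu]
    simp only [map_zero, map_smul, map_neg, nuv, nuz,
      LinearMap.zero_apply, LinearMap.neg_apply, if_pos rfl]
    match_scalars <;> (try simp only [if_true]) <;> first | ring | (field_simp; ring)
  · rw [hR, nvv, nzv, hbzv]
    simp only [map_zero, map_smul, map_neg, nvu, nvz,
      LinearMap.zero_apply, LinearMap.neg_apply, if_pos rfl]
    match_scalars <;> (try simp only [if_true]) <;> first | ring | (field_simp; ring)
end

section
/- The Ricci tensor satisfies, for all 1 ≤ i, j ≤ n: Ric(u_i, u_j) = −(λ δ_{ij})/(2σ_i), Ric(v_i, v_j) = −(λ δ_{ij})/(2σ_i), and Ric(z, z) = (λ²/2) Σ_{k=1}^n 1/σ_k². -/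
set_option maxHeartbeats 1000000


theorem stmt_2
    {H : Type*} [AddCommGroup H] [Module ℝ H]
    (n : ℕ) (hn : 1 ≤ n)
    (u v : Fin n → H) (z : H)
    (b : Module.Basis (Fin n ⊕ Fin n ⊕ Unit) ℝ H)
    (hbu : ∀ i, b (Sum.inl i) = u i)
    (hbv : ∀ i, b (Sum.inr (Sum.inl i)) = v i)
    (hbz : b (Sum.inr (Sum.inr ())) = z)
    (bracket : H →ₗ[ℝ] H →ₗ[ℝ] H)
    (hbskew : ∀ X Y : H, bracket X Y = - bracket Y X)
    (hbuv : ∀ i j, bracket (u i) (v j) = if i = j then z else 0)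
    (hbuu : ∀ i j, bracket (u i) (u j) = 0)
    (hbvv : ∀ i j, bracket (v i) (v j) = 0)
    (hbuz : ∀ i, bracket (u i) z = 0)
    (hbvz : ∀ i, bracket (v i) z = 0)
    (lam : ℝ) (hlam : 0 < lam)
    (sigma : Fin n → ℝ) (hsigma : ∀ i, 0 < sigma i)
    (ip : H →ₗ[ℝ] H →ₗ[ℝ] ℝ)
    (hipsymm : ∀ X Y : H, ip X Y = ip Y X)
    (hippos : ∀ X : H, X ≠ 0 → 0 < ip X X)
    (hipuu : ∀ i j, ip (u i) (u j) = if i = j then sigma i else 0)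
    (hipvv : ∀ i j, ip (v i) (v j) = if i = j then sigma i else 0)
    (hipuv : ∀ i j, ip (u i) (v j) = 0)
    (hipuz : ∀ i, ip (u i) z = 0)
    (hipvz : ∀ i, ip (v i) z = 0)
    (hipzz : ip z z = lam)
    (nabla : H →ₗ[ℝ] H →ₗ[ℝ] H)
    (hKoszul : ∀ U V X : H, 2 * ip (nabla U V) X =
      ip (bracket U V) X - ip (bracket V X) U + ip (bracket X U) V)
    (R : H → H → H → H)
    (hR : ∀ U V X : H, R U V X =
      nabla U (nabla V X) - nabla V (nabla U X) - nabla (bracket U V) X)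
    (Ric : H → H → ℝ)
    (hRic : ∀ X Y : H, Ric X Y = (1 / lam) * ip (R X z z) Y +
      ∑ k, (1 / sigma k) * (ip (R X (u k) (u k)) Y + ip (R X (v k) (v k)) Y))
    :
    (∀ i j : Fin n,
      Ric (u i) (u j) = -(lam * (if i = j then 1 else 0)) / (2 * sigma i) ∧
      Ric (v i) (v j) = -(lam * (if i = j then 1 else 0)) / (2 * sigma i)) ∧
    Ric z z = (lam ^ 2 / 2) * ∑ k, 1 / (sigma k) ^ 2 := by

  classical
  have hlam0 : lam ≠ 0 := ne_of_gt hlam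
  have hsig0 : ∀ i, sigma i ≠ 0 := fun i => ne_of_gt (hsigma i)
  -- symmetric inner product facts
  have hipvu : ∀ i j, ip (v i) (u j) = 0 := fun i j => by rw [hipsymm]; exact hipuv j i
  have hipzu : ∀ i, ip z (u i) = 0 := fun i => by rw [hipsymm]; exact hipuz i
  have hipzv : ∀ i, ip z (v i) = 0 := fun i => by rw [hipsymm]; exact hipvz i
  -- reversed brackets
  have hbvu : ∀ i j, bracket (v i) (u j) = -(if j = i then z else 0) := fun i j => by
    rw [hbskew, hbuv]
  have hbzu : ∀ i, bracket z (u i) = 0 := fun i => by rw [hbskew, hbuz, neg_zero]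
  have hbzv : ∀ i, bracket z (v i) = 0 := fun i => by rw [hbskew, hbvz, neg_zero]
  have hbzz : bracket z z = 0 := by
    have h := hbskew z z
    have h2 : (2:ℝ) • bracket z z = 0 := by
      rw [two_smul]; nth_rewrite 2 [h]; simp
    simpa using (smul_eq_zero.mp h2).resolve_left (by norm_num)
  -- nondegeneracy
  have hnd : ∀ X : H, (∀ w, ip X (b w) = 0) → X = 0 := by
    intro X h
    by_contra hX
    have h0 : ip X = 0 := b.ext (by simpa using h)
    have hp := hippos X hX
    rw [h0] at hp
    simp at hp
  -- determine nabla from Koszul formula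
  have hdet : ∀ A B T : H, (∀ w, 2 * ip T (b w) =
      ip (bracket A B) (b w) - ip (bracket B (b w)) A + ip (bracket (b w) A) B) →
      nabla A B = T := by
    intro A B T h
    have hz : nabla A B - T = 0 := by
      apply hnd
      intro w
      have h1 := hKoszul A B (b w)
      have h2 := h w
      have h3 : ip (nabla A B - T) (b w) = ip (nabla A B) (b w) - ip T (b w) := by
        rw [map_sub, LinearMap.sub_apply]
      rw [h3]; linarith
    exact sub_eq_zero.mp hz
  -- the connection on basis vectors
  have ipite : ∀ (P : Prop) [inst : Decidable P] (X Y W : H),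
      ip (if P then X else Y) W = if P then ip X W else ip Y W := by
    intro P inst X Y W; split_ifs <;> rfl
  have huu : ∀ i j, nabla (u i) (u j) = 0 := by
    intro i j; apply hdet; intro w
    rcases w with k | k | _ <;> simp [ipite, hbu, hbv, hbz, hbuv, hbuu, hbvv, hbuz, hbvz, hbvu, hbzu, hbzv, hbzz,
        hipuu, hipvv, hipuv, hipvu, hipuz, hipvz, hipzu, hipzv, hipzz, eq_comm]
    all_goals try split_ifs
    all_goals first | rfl | ring1 | (field_simp [hsig0, hlam0] <;> ring1) |
      (simp_all; all_goals first | ring1 | (field_simp [hsig0, hlam0] <;> ring1))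
  have hvv : ∀ i j, nabla (v i) (v j) = 0 := by
    intro i j; apply hdet; intro w
    rcases w with k | k | _ <;> simp [ipite, hbu, hbv, hbz, hbuv, hbuu, hbvv, hbuz, hbvz, hbvu, hbzu, hbzv, hbzz,
        hipuu, hipvv, hipuv, hipvu, hipuz, hipvz, hipzu, hipzv, hipzz, eq_comm]
    all_goals try split_ifs
    all_goals first | rfl | ring1 | (field_simp [hsig0, hlam0] <;> ring1) |
      (simp_all; all_goals first | ring1 | (field_simp [hsig0, hlam0] <;> ring1))
  have huv : ∀ i j, nabla (u i) (v j) = if i = j then ((1:ℝ)/2) • z else 0 := by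
    intro i j; apply hdet; intro w
    rcases w with k | k | _ <;> simp [ipite, hbu, hbv, hbz, hbuv, hbuu, hbvv, hbuz, hbvz, hbvu, hbzu, hbzv, hbzz,
        hipuu, hipvv, hipuv, hipvu, hipuz, hipvz, hipzu, hipzv, hipzz, eq_comm]
    all_goals try split_ifs
    all_goals first | rfl | ring1 | (field_simp [hsig0, hlam0] <;> ring1) |
      (simp_all; all_goals first | ring1 | (field_simp [hsig0, hlam0] <;> ring1))
  have hvu : ∀ i j, nabla (v i) (u j) = if i = j then (-((1:ℝ)/2)) • z else 0 := by
    intro i j; apply hdet; intro w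
    rcases w with k | k | _ <;> simp [ipite, hbu, hbv, hbz, hbuv, hbuu, hbvv, hbuz, hbvz, hbvu, hbzu, hbzv, hbzz,
        hipuu, hipvv, hipuv, hipvu, hipuz, hipvz, hipzu, hipzv, hipzz, eq_comm]
    all_goals try split_ifs
    all_goals first | rfl | ring1 | (field_simp [hsig0, hlam0] <;> ring1) |
      (simp_all; all_goals first | ring1 | (field_simp [hsig0, hlam0] <;> ring1))
  have huz : ∀ i, nabla (u i) z = (-((lam / (2 * sigma i)))) • v i := by
    intro i; apply hdet; intro w
    rcases w with k | k | _ <;> simp [ipite, hbu, hbv, hbz, hbuv, hbuu, hbvv, hbuz, hbvz, hbvu, hbzu, hbzv, hbzz,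
        hipuu, hipvv, hipuv, hipvu, hipuz, hipvz, hipzu, hipzv, hipzz, eq_comm]
    all_goals try split_ifs
    all_goals first | rfl | ring1 | (field_simp [hsig0, hlam0] <;> ring1) |
      (simp_all; all_goals first | ring1 | (field_simp [hsig0, hlam0] <;> ring1))
  have hvz : ∀ i, nabla (v i) z = ((lam / (2 * sigma i))) • u i := by
    intro i; apply hdet; intro w
    rcases w with k | k | _ <;> simp [ipite, hbu, hbv, hbz, hbuv, hbuu, hbvv, hbuz, hbvz, hbvu, hbzu, hbzv, hbzz,
        hipuu, hipvv, hipuv, hipvu, hipuz, hipvz, hipzu, hipzv, hipzz, eq_comm]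
    all_goals try split_ifs
    all_goals first | rfl | ring1 | (field_simp [hsig0, hlam0] <;> ring1) |
      (simp_all; all_goals first | ring1 | (field_simp [hsig0, hlam0] <;> ring1))
  have hzu : ∀ i, nabla z (u i) = (-((lam / (2 * sigma i)))) • v i := by
    intro i; apply hdet; intro w
    rcases w with k | k | _ <;> simp [ipite, hbu, hbv, hbz, hbuv, hbuu, hbvv, hbuz, hbvz, hbvu, hbzu, hbzv, hbzz,
        hipuu, hipvv, hipuv, hipvu, hipuz, hipvz, hipzu, hipzv, hipzz, eq_comm]
    all_goals try split_ifs
    all_goals first | rfl | ring1 | (field_simp [hsig0, hlam0] <;> ring1) |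
      (simp_all; all_goals first | ring1 | (field_simp [hsig0, hlam0] <;> ring1))
  have hzv : ∀ i, nabla z (v i) = ((lam / (2 * sigma i))) • u i := by
    intro i; apply hdet; intro w
    rcases w with k | k | _ <;> simp [ipite, hbu, hbv, hbz, hbuv, hbuu, hbvv, hbuz, hbvz, hbvu, hbzu, hbzv, hbzz,
        hipuu, hipvv, hipuv, hipvu, hipuz, hipvz, hipzu, hipzv, hipzz, eq_comm]
    all_goals try split_ifs
    all_goals first | rfl | ring1 | (field_simp [hsig0, hlam0] <;> ring1) |
      (simp_all; all_goals first | ring1 | (field_simp [hsig0, hlam0] <;> ring1))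
  have hzz : nabla z z = 0 := by
    apply hdet; intro w
    rcases w with k | k | _ <;> simp [ipite, hbu, hbv, hbz, hbuv, hbuu, hbvv, hbuz, hbvz, hbvu, hbzu, hbzv, hbzz,
        hipuu, hipvv, hipuv, hipvu, hipuz, hipvz, hipzu, hipzv, hipzz, eq_comm]
    all_goals try split_ifs
    all_goals first | rfl | ring1 | (field_simp [hsig0, hlam0] <;> ring1) |
      (simp_all; all_goals first | ring1 | (field_simp [hsig0, hlam0] <;> ring1))
  -- curvature values
  have hRuzz : ∀ i, R (u i) z z = ((lam / (2 * sigma i)) * (lam / (2 * sigma i))) • u i := by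
    intro i
    rw [hR, hzz, huz i, hbuz i]
    simp [map_smul, hzv i, smul_smul]
    try module
  have hRvzz : ∀ i, R (v i) z z = ((lam / (2 * sigma i)) * (lam / (2 * sigma i))) • v i := by
    intro i
    rw [hR, hzz, hvz i, hbvz i]
    simp [map_smul, hzu i, smul_smul]
    try module
  have hRzzz : R z z z = 0 := by
    rw [hR, hzz, hbzz]
    simp
  have hRuuu : ∀ i k, R (u i) (u k) (u k) = 0 := by
    intro i k
    rw [hR, huu, huu, hbuu]
    simp
  have hRvvv : ∀ i k, R (v i) (v k) (v k) = 0 := by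
    intro i k
    rw [hR, hvv, hvv, hbvv]
    simp
  have hRuvv : ∀ i k, R (u i) (v k) (v k) = if i = k then (-((3:ℝ)/2) * (lam / (2 * sigma k))) • u k else 0 := by
    intro i k
    rw [hR, hvv, huv i k, hbuv i k]
    by_cases h : i = k
    · subst h
      simp [map_smul, hvz i, hzv i, smul_smul]
      module
    · simp [h]
  have hRvuu : ∀ i k, R (v i) (u k) (u k) = if i = k then (-((3:ℝ)/2) * (lam / (2 * sigma k))) • v k else 0 := by
    intro i k
    rw [hR, huu, hvu i k, hbvu i k]
    by_cases h : i = k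
    · subst h
      simp [map_smul, huz i, hzu i, smul_smul]
      module
    · simp [h, Ne.symm h]
  have hRzuu : ∀ k, R z (u k) (u k) = (((1:ℝ)/2) * (lam / (2 * sigma k))) • z := by
    intro k
    rw [hR, huu, hzu k, hbzu k]
    simp [map_smul, huv k k, smul_smul]
    module
  have hRzvv : ∀ k, R z (v k) (v k) = (((1:ℝ)/2) * (lam / (2 * sigma k))) • z := by
    intro k
    rw [hR, hvv, hzv k, hbzv k]
    simp [map_smul, hvu k k, smul_smul]
    module
  refine ⟨fun i j => ⟨?_, ?_⟩, ?_⟩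
  · -- Ric (u i) (u j)
    rw [hRic]
    have hsum : ∀ k : Fin n, (1 / sigma k) *
        (ip (R (u i) (u k) (u k)) (u j) + ip (R (u i) (v k) (v k)) (u j)) =
        if i = k then (1 / sigma k) * ((-((3:ℝ)/2) * (lam / (2 * sigma k))) * (if k = j then sigma k else 0)) else 0 := by
      intro k
      rw [hRuuu, hRuvv]
      by_cases h : i = k <;> simp [h, hipuu, map_smul] <;> split_ifs <;> first | ring1 | simp
    simp only [hsum, Finset.sum_ite_eq, Finset.mem_univ, if_true, hRuzz i]
    have e1 : ip (((lam / (2 * sigma i)) * (lam / (2 * sigma i))) • u i) (u j) = ((lam / (2 * sigma i)) * (lam / (2 * sigma i))) * (if i = j then sigma i else 0) := by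
      rw [map_smul, LinearMap.smul_apply, hipuu, smul_eq_mul]
    rw [e1]
    have hsi := hsig0 i
    rcases eq_or_ne i j with h | h
    · subst h
      simp only [if_pos rfl]
      field_simp
      simp only [if_true]
      ring1
    · simp only [if_neg h]
      simp
  · -- Ric (v i) (v j)
    rw [hRic]
    have hsum : ∀ k : Fin n, (1 / sigma k) *
        (ip (R (v i) (u k) (u k)) (v j) + ip (R (v i) (v k) (v k)) (v j)) =
        if i = k then (1 / sigma k) * ((-((3:ℝ)/2) * (lam / (2 * sigma k))) * (if k = j then sigma k else 0)) else 0 := by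
      intro k
      rw [hRvvv, hRvuu]
      by_cases h : i = k <;> simp [h, hipvv, map_smul] <;> split_ifs <;> first | ring1 | simp
    simp only [hsum, Finset.sum_ite_eq, Finset.mem_univ, if_true, hRvzz i]
    have e1 : ip (((lam / (2 * sigma i)) * (lam / (2 * sigma i))) • v i) (v j) = ((lam / (2 * sigma i)) * (lam / (2 * sigma i))) * (if i = j then sigma i else 0) := by
      rw [map_smul, LinearMap.smul_apply, hipvv, smul_eq_mul]
    rw [e1]
    have hsi := hsig0 i
    rcases eq_or_ne i j with h | h
    · subst h
      simp only [if_pos rfl]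
      field_simp
      simp only [if_true]
      ring1
    · simp only [if_neg h]
      simp
  · -- Ric z z
    rw [hRic, hRzzz]
    have hsum : ∀ k : Fin n, (1 / sigma k) *
        (ip (R z (u k) (u k)) z + ip (R z (v k) (v k)) z) =
        (lam ^ 2 / 2) * (1 / (sigma k) ^ 2) := by
      intro k
      rw [hRzuu, hRzvv]
      have e1 : ip ((((1:ℝ)/2) * (lam / (2 * sigma k))) • z) z = (((1:ℝ)/2) * (lam / (2 * sigma k))) * lam := by
        rw [map_smul, LinearMap.smul_apply, hipzz, smul_eq_mul]
      rw [e1]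
      field_simp [hsig0, hlam0]
      ring1
    simp only [hsum, Finset.mul_sum]
    simp only [map_zero, LinearMap.zero_apply, mul_zero, zero_add]
end

section
/- The scalar curvature equals −(λ/2) Σ_{i=1}^n 1/σ_i²; in particular it is a strictly negative constant. -/
set_option maxHeartbeats 4000000 in
theorem stmt_3
    {H : Type*} [AddCommGroup H] [Module ℝ H]
    (n : ℕ) (hn : 1 ≤ n)
    (u v : Fin n → H) (z : H)
    (b : Module.Basis (Fin n ⊕ Fin n ⊕ Unit) ℝ H)
    (hbu : ∀ i, b (Sum.inl i) = u i)
    (hbv : ∀ i, b (Sum.inr (Sum.inl i)) = v i)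
    (hbz : b (Sum.inr (Sum.inr ())) = z)
    (bracket : H →ₗ[ℝ] H →ₗ[ℝ] H)
    (hbskew : ∀ X Y : H, bracket X Y = - bracket Y X)
    (hbuv : ∀ i j, bracket (u i) (v j) = if i = j then z else 0)
    (hbuu : ∀ i j, bracket (u i) (u j) = 0)
    (hbvv : ∀ i j, bracket (v i) (v j) = 0)
    (hbuz : ∀ i, bracket (u i) z = 0)
    (hbvz : ∀ i, bracket (v i) z = 0)
    (lam : ℝ) (hlam : 0 < lam)
    (sigma : Fin n → ℝ) (hsigma : ∀ i, 0 < sigma i)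
    (ip : H →ₗ[ℝ] H →ₗ[ℝ] ℝ)
    (hipsymm : ∀ X Y : H, ip X Y = ip Y X)
    (hippos : ∀ X : H, X ≠ 0 → 0 < ip X X)
    (hipuu : ∀ i j, ip (u i) (u j) = if i = j then sigma i else 0)
    (hipvv : ∀ i j, ip (v i) (v j) = if i = j then sigma i else 0)
    (hipuv : ∀ i j, ip (u i) (v j) = 0)
    (hipuz : ∀ i, ip (u i) z = 0)
    (hipvz : ∀ i, ip (v i) z = 0)
    (hipzz : ip z z = lam)
    (nabla : H →ₗ[ℝ] H →ₗ[ℝ] H)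
    (hKoszul : ∀ U V X : H, 2 * ip (nabla U V) X =
      ip (bracket U V) X - ip (bracket V X) U + ip (bracket X U) V)
    (R : H → H → H → H)
    (hR : ∀ U V X : H, R U V X =
      nabla U (nabla V X) - nabla V (nabla U X) - nabla (bracket U V) X)
    (Ric : H → H → ℝ)
    (hRic : ∀ X Y : H, Ric X Y = (1 / lam) * ip (R X z z) Y +
      ∑ k, (1 / sigma k) * (ip (R X (u k) (u k)) Y + ip (R X (v k) (v k)) Y))
    (Scal : ℝ)
    (hScal : Scal = (1 / lam) * Ric z z +
      ∑ i, (1 / sigma i) * (Ric (u i) (u i) + Ric (v i) (v i)))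
    :
    Scal = -(lam / 2) * ∑ i, 1 / (sigma i) ^ 2 ∧ Scal < 0 := by
  have hs : ∀ i, sigma i ≠ 0 := fun i => (hsigma i).ne'
  -- derived bracket facts
  have hbvu : ∀ i j, bracket (v i) (u j) = if j = i then -z else 0 := by
    intro i j; rw [hbskew, hbuv]; split_ifs <;> simp
  have hbzu : ∀ i, bracket z (u i) = 0 := by intro i; rw [hbskew, hbuz, neg_zero]
  have hbzv : ∀ i, bracket z (v i) = 0 := by intro i; rw [hbskew, hbvz, neg_zero]
  have hbzz : bracket z z = 0 := by
    have h := hbskew z z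
    have h2 : (2:ℝ) • bracket z z = 0 := by
      rw [two_smul]; nth_rewrite 1 [h]; simp
    rcases smul_eq_zero.mp h2 with h3 | h3
    · norm_num at h3
    · exact h3
  -- derived ip facts
  have hipvu : ∀ i j, ip (v i) (u j) = 0 := fun i j => by rw [hipsymm, hipuv]
  have hipzu : ∀ i, ip z (u i) = 0 := fun i => by rw [hipsymm, hipuz]
  have hipzv : ∀ i, ip z (v i) = 0 := fun i => by rw [hipsymm, hipvz]
  -- injectivity of ip
  have ipeq : ∀ W W' : H, (∀ s, ip W (b s) = ip W' (b s)) → W = W' := by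
    intro W W' h
    have h1 : (ip W) = (ip W') := b.ext h
    by_contra hne
    have hd := hippos (W - W') (sub_ne_zero.mpr hne)
    have h0 : ip (W - W') (W - W') = 0 := by
      simp [map_sub, LinearMap.sub_apply, h1]
    linarith
  have koz : ∀ U V X : H, ip (nabla U V) X =
      (ip (bracket U V) X - ip (bracket V X) U + ip (bracket X U) V) / 2 := by
    intro U V X; have := hKoszul U V X; linarith
  have ipite : ∀ (c : Prop) [Decidable c] (X Y W : H),
      ip (if c then X else Y) W = if c then ip X W else ip Y W := by
    intro c _ X Y W; split_ifs <;> rfl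
  clear hKoszul hippos hipsymm hbskew
  have huv : ∀ i j, nabla (u i) (v j) = if i = j then ((1:ℝ)/2) • z else 0 := by
    intro i j
    apply ipeq; intro s
    rcases s with k | k | ⟨⟩ <;>
      simp [hbu, hbv, hbz, koz, hbuv, hbuu, hbvv, hbuz, hbvz, hbvu, hbzu, hbzv, hbzz, ipite,
        hipuu, hipvv, hipuv, hipuz, hipvz, hipzz, hipvu, hipzu, hipzv, eq_comm] <;>
      (try split_ifs) <;> (try field_simp [hs i]) <;> (try ring)
  have hvu : ∀ i j, nabla (v i) (u j) = if i = j then (-(1:ℝ)/2) • z else 0 := by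
    intro i j
    apply ipeq; intro s
    rcases s with k | k | ⟨⟩ <;>
      simp [hbu, hbv, hbz, koz, hbuv, hbuu, hbvv, hbuz, hbvz, hbvu, hbzu, hbzv, hbzz, ipite,
        hipuu, hipvv, hipuv, hipuz, hipvz, hipzz, hipvu, hipzu, hipzv, eq_comm] <;>
      (try split_ifs) <;> (try field_simp [hs i]) <;> (try ring)
  have huu : ∀ i j, nabla (u i) (u j) = 0 := by
    intro i j
    apply ipeq; intro s
    rcases s with k | k | ⟨⟩ <;>
      simp [hbu, hbv, hbz, koz, hbuv, hbuu, hbvv, hbuz, hbvz, hbvu, hbzu, hbzv, hbzz, ipite,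
        hipuu, hipvv, hipuv, hipuz, hipvz, hipzz, hipvu, hipzu, hipzv, eq_comm] <;>
      (try split_ifs) <;> (try field_simp [hs i]) <;> (try ring)
  have hvv : ∀ i j, nabla (v i) (v j) = 0 := by
    intro i j
    apply ipeq; intro s
    rcases s with k | k | ⟨⟩ <;>
      simp [hbu, hbv, hbz, koz, hbuv, hbuu, hbvv, hbuz, hbvz, hbvu, hbzu, hbzv, hbzz, ipite,
        hipuu, hipvv, hipuv, hipuz, hipvz, hipzz, hipvu, hipzu, hipzv, eq_comm] <;>
      (try split_ifs) <;> (try field_simp [hs i]) <;> (try ring)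
  have huz : ∀ i, nabla (u i) z = (-(lam / (2 * sigma i))) • v i := by
    intro i
    apply ipeq; intro s
    rcases s with k | k | ⟨⟩ <;>
      simp [hbu, hbv, hbz, koz, hbuv, hbuu, hbvv, hbuz, hbvz, hbvu, hbzu, hbzv, hbzz, ipite,
        hipuu, hipvv, hipuv, hipuz, hipvz, hipzz, hipvu, hipzu, hipzv, eq_comm] <;>
      (try split_ifs) <;> (try field_simp [hs i]) <;> (try ring)
  have hvz : ∀ i, nabla (v i) z = (lam / (2 * sigma i)) • u i := by
    intro i
    apply ipeq; intro s
    rcases s with k | k | ⟨⟩ <;>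
      simp [hbu, hbv, hbz, koz, hbuv, hbuu, hbvv, hbuz, hbvz, hbvu, hbzu, hbzv, hbzz, ipite,
        hipuu, hipvv, hipuv, hipuz, hipvz, hipzz, hipvu, hipzu, hipzv, eq_comm] <;>
      (try split_ifs) <;> (try field_simp [hs i]) <;> (try ring)
  have hzu : ∀ i, nabla z (u i) = (-(lam / (2 * sigma i))) • v i := by
    intro i
    apply ipeq; intro s
    rcases s with k | k | ⟨⟩ <;>
      simp [hbu, hbv, hbz, koz, hbuv, hbuu, hbvv, hbuz, hbvz, hbvu, hbzu, hbzv, hbzz, ipite,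
        hipuu, hipvv, hipuv, hipuz, hipvz, hipzz, hipvu, hipzu, hipzv, eq_comm] <;>
      (try split_ifs) <;> (try field_simp [hs i]) <;> (try ring)
  have hzv : ∀ i, nabla z (v i) = (lam / (2 * sigma i)) • u i := by
    intro i
    apply ipeq; intro s
    rcases s with k | k | ⟨⟩ <;>
      simp [hbu, hbv, hbz, koz, hbuv, hbuu, hbvv, hbuz, hbvz, hbvu, hbzu, hbzv, hbzz, ipite,
        hipuu, hipvv, hipuv, hipuz, hipvz, hipzz, hipvu, hipzu, hipzv, eq_comm] <;>
      (try split_ifs) <;> (try field_simp [hs i]) <;> (try ring)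
  have hzz : nabla z z = 0 := by
    apply ipeq; intro s
    rcases s with k | k | ⟨⟩ <;>
      simp [hbu, hbv, hbz, koz, hbuv, hbuu, hbvv, hbuz, hbvz, hbvu, hbzu, hbzv, hbzz, ipite,
        hipuu, hipvv, hipuv, hipuz, hipvz, hipzz, hipvu, hipzu, hipzv, eq_comm]
  -- curvature values
  have Rzz : R z z z = 0 := by
    rw [hR, hzz, hbzz]; simp
  have Rzuu : ∀ k, R z (u k) (u k) = ((lam / (2 * sigma k)) * (1/2)) • z := by
    intro k
    rw [hR, huu, hzu, hbzu]
    simp only [map_zero, map_smul, map_neg, huv, if_pos rfl, ite_true, if_true, eq_self_iff_true, LinearMap.zero_apply,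
      LinearMap.neg_apply, LinearMap.smul_apply]
    module
  have Rzvv : ∀ k, R z (v k) (v k) = ((lam / (2 * sigma k)) * (1/2)) • z := by
    intro k
    rw [hR, hvv, hzv, hbzv]
    simp only [map_zero, map_smul, map_neg, hvu, if_pos rfl, ite_true, if_true, eq_self_iff_true, LinearMap.zero_apply,
      LinearMap.neg_apply, LinearMap.smul_apply]
    module
  have Ruzz : ∀ i, R (u i) z z = ((lam / (2 * sigma i)) * (lam / (2 * sigma i))) • u i := by
    intro i
    rw [hR, hzz, huz, hbuz]
    simp only [map_zero, map_smul, map_neg, hzv, LinearMap.zero_apply,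
      LinearMap.neg_apply, LinearMap.smul_apply]
    module
  have Rvzz : ∀ i, R (v i) z z = ((lam / (2 * sigma i)) * (lam / (2 * sigma i))) • v i := by
    intro i
    rw [hR, hzz, hvz, hbvz]
    simp only [map_zero, map_smul, map_neg, hzu, LinearMap.zero_apply,
      LinearMap.neg_apply, LinearMap.smul_apply]
    module
  have Ruuu : ∀ i k, R (u i) (u k) (u k) = 0 := by
    intro i k
    rw [hR, huu, huu, hbuu]
    simp [huu]
  have Rvvv : ∀ i k, R (v i) (v k) (v k) = 0 := by
    intro i k
    rw [hR, hvv, hvv, hbvv]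
    simp [hvv]
  have Ruvv : ∀ i k, R (u i) (v k) (v k) =
      if i = k then (-(3/2 * (lam / (2 * sigma k)))) • u k else 0 := by
    intro i k
    rw [hR, hvv, huv, hbuv]
    rcases eq_or_ne i k with h | h
    · subst h
      simp only [if_pos rfl, ite_true, if_true, eq_self_iff_true, map_zero, map_smul, hvz, hzv, LinearMap.smul_apply]
      module
    · simp [if_neg h]
  have Rvuu : ∀ i k, R (v i) (u k) (u k) =
      if i = k then (-(3/2 * (lam / (2 * sigma k)))) • v k else 0 := by
    intro i k
    rw [hR, huu, hvu, hbvu]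
    rcases eq_or_ne i k with h | h
    · subst h
      simp only [if_pos rfl, ite_true, if_true, eq_self_iff_true, map_zero, map_smul, map_neg, huz, hzu, LinearMap.smul_apply,
        LinearMap.neg_apply]
      module
    · simp [if_neg h, if_neg (Ne.symm h)]
  -- Ricci values
  have Riczz : Ric z z = ∑ k, lam ^ 2 / (2 * (sigma k) ^ 2) := by
    rw [hRic, Rzz]
    simp only [map_zero, LinearMap.zero_apply, mul_zero, zero_add]
    apply Finset.sum_congr rfl
    intro k _
    rw [Rzuu, Rzvv]
    simp only [map_smul, LinearMap.smul_apply, smul_eq_mul, hipzz]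
    field_simp
    ring
  have Ricuu : ∀ i, Ric (u i) (u i) = -(lam / (2 * sigma i)) := by
    intro i
    rw [hRic, Ruzz]
    have hterm : ∀ k, (1 / sigma k) * (ip (R (u i) (u k) (u k)) (u i)
        + ip (R (u i) (v k) (v k)) (u i)) = if k = i then -(3 * lam / (4 * sigma i)) else 0 := by
      intro k
      rw [Ruuu, Ruvv]
      rcases eq_or_ne i k with h | h
      · subst h
        simp only [if_pos rfl, ite_true, if_true, eq_self_iff_true, map_zero, map_smul, LinearMap.zero_apply, LinearMap.smul_apply,
          smul_eq_mul, hipuu, zero_add]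
        field_simp [hs i]
        ring
      · simp [if_neg h, Ne.symm h]
    rw [Finset.sum_congr rfl (fun k _ => hterm k), Finset.sum_ite_eq' Finset.univ i]
    simp only [Finset.mem_univ, if_true, map_smul, LinearMap.smul_apply, smul_eq_mul,
      hipuu, if_pos rfl]
    have h1 := hs i
    have h2 := hlam.ne'
    field_simp
    ring
  have Ricvv : ∀ i, Ric (v i) (v i) = -(lam / (2 * sigma i)) := by
    intro i
    rw [hRic, Rvzz]
    have hterm : ∀ k, (1 / sigma k) * (ip (R (v i) (u k) (u k)) (v i)
        + ip (R (v i) (v k) (v k)) (v i)) = if k = i then -(3 * lam / (4 * sigma i)) else 0 := by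
      intro k
      rw [Rvvv, Rvuu]
      rcases eq_or_ne i k with h | h
      · subst h
        simp only [if_pos rfl, ite_true, if_true, eq_self_iff_true, map_zero, map_smul, LinearMap.zero_apply, LinearMap.smul_apply,
          smul_eq_mul, hipvv, add_zero]
        field_simp [hs i]
        ring
      · simp [if_neg h, Ne.symm h]
    rw [Finset.sum_congr rfl (fun k _ => hterm k), Finset.sum_ite_eq' Finset.univ i]
    simp only [Finset.mem_univ, if_true, map_smul, LinearMap.smul_apply, smul_eq_mul,
      hipvv, if_pos rfl]
    have h1 := hs i
    have h2 := hlam.ne'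
    field_simp
    ring
  -- scalar curvature
  have hScal' : Scal = -(lam / 2) * ∑ i, 1 / (sigma i) ^ 2 := by
    rw [hScal, Riczz, Finset.mul_sum, Finset.mul_sum, ← Finset.sum_add_distrib]
    apply Finset.sum_congr rfl
    intro i _
    rw [Ricuu, Ricvv]
    have h1 := hs i
    have h2 := hlam.ne'
    field_simp
    ring
  refine ⟨hScal', ?_⟩
  rw [hScal']
  have hS : 0 < ∑ i, 1 / (sigma i) ^ 2 := by
    haveI : Nonempty (Fin n) := Fin.pos_iff_nonempty.mp hn
    apply Finset.sum_pos
    · intro i _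
      exact div_pos one_pos (pow_pos (hsigma i) 2)
    · exact Finset.univ_nonempty
  nlinarith
end

section
/- There is no real constant c such that Ric(X, Y) = c⟨X, Y⟩ for all X, Y ∈ 𝔥; that is, the left-invariant metric on the Heisenberg group H_{2n+1} is never Einstein. -/
set_option maxHeartbeats 2000000 in
theorem stmt_4
    {H : Type*} [AddCommGroup H] [Module ℝ H]
    (n : ℕ) (hn : 1 ≤ n)
    (u v : Fin n → H) (z : H)
    (b : Module.Basis (Fin n ⊕ Fin n ⊕ Unit) ℝ H)
    (hbu : ∀ i, b (Sum.inl i) = u i)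
    (hbv : ∀ i, b (Sum.inr (Sum.inl i)) = v i)
    (hbz : b (Sum.inr (Sum.inr ())) = z)
    (bracket : H →ₗ[ℝ] H →ₗ[ℝ] H)
    (hbskew : ∀ X Y : H, bracket X Y = - bracket Y X)
    (hbuv : ∀ i j, bracket (u i) (v j) = if i = j then z else 0)
    (hbuu : ∀ i j, bracket (u i) (u j) = 0)
    (hbvv : ∀ i j, bracket (v i) (v j) = 0)
    (hbuz : ∀ i, bracket (u i) z = 0)
    (hbvz : ∀ i, bracket (v i) z = 0)
    (lam : ℝ) (hlam : 0 < lam)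
    (sigma : Fin n → ℝ) (hsigma : ∀ i, 0 < sigma i)
    (ip : H →ₗ[ℝ] H →ₗ[ℝ] ℝ)
    (hipsymm : ∀ X Y : H, ip X Y = ip Y X)
    (hippos : ∀ X : H, X ≠ 0 → 0 < ip X X)
    (hipuu : ∀ i j, ip (u i) (u j) = if i = j then sigma i else 0)
    (hipvv : ∀ i j, ip (v i) (v j) = if i = j then sigma i else 0)
    (hipuv : ∀ i j, ip (u i) (v j) = 0)
    (hipuz : ∀ i, ip (u i) z = 0)
    (hipvz : ∀ i, ip (v i) z = 0)
    (hipzz : ip z z = lam)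
    (nabla : H →ₗ[ℝ] H →ₗ[ℝ] H)
    (hKoszul : ∀ U V X : H, 2 * ip (nabla U V) X =
      ip (bracket U V) X - ip (bracket V X) U + ip (bracket X U) V)
    (R : H → H → H → H)
    (hR : ∀ U V X : H, R U V X =
      nabla U (nabla V X) - nabla V (nabla U X) - nabla (bracket U V) X)
    (Ric : H → H → ℝ)
    (hRic : ∀ X Y : H, Ric X Y = (1 / lam) * ip (R X z z) Y +
      ∑ k, (1 / sigma k) * (ip (R X (u k) (u k)) Y + ip (R X (v k) (v k)) Y))
    :
    ¬ ∃ c : ℝ, ∀ X Y : H, Ric X Y = c * ip X Y := by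
  rintro ⟨c, hc⟩
  -- symmetric / skew helper facts
  have hipzu : ∀ i, ip z (u i) = 0 := fun i => (hipsymm z (u i)).trans (hipuz i)
  have hipzv : ∀ i, ip z (v i) = 0 := fun i => (hipsymm z (v i)).trans (hipvz i)
  have hipvu : ∀ i j, ip (v i) (u j) = 0 := fun i j =>
    (hipsymm (v i) (u j)).trans (hipuv j i)
  have hbvu : ∀ i j, bracket (v i) (u j) = if j = i then -z else 0 := by
    intro i j; rw [hbskew, hbuv]; split <;> simp
  have hbzu : ∀ i, bracket z (u i) = 0 := by
    intro i; rw [hbskew, hbuz]; simp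
  have hbzv : ∀ i, bracket z (v i) = 0 := by
    intro i; rw [hbskew, hbvz]; simp
  have hbzz : bracket z z = 0 := by
    have h := hbskew z z
    have h2 : (2:ℝ) • bracket z z = 0 := by
      rw [two_smul]
      exact add_eq_zero_iff_eq_neg.mpr h
    simpa using (smul_eq_zero.mp h2).resolve_left (by norm_num)
  have ipite : ∀ (P : Prop) [inst : Decidable P] (W Y : H),
      ip (if P then W else 0) Y = if P then ip W Y else 0 := by
    intro P inst W Y; split <;> simp
  -- nondegeneracy
  have key0 : ∀ W : H, (∀ X : H, ip W X = 0) → W = 0 := by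
    intro W h
    by_contra hW
    exact absurd (h W) (ne_of_gt (hippos W hW))
  have fzero : ∀ f : H →ₗ[ℝ] ℝ, (∀ i, f (u i) = 0) → (∀ i, f (v i) = 0) → f z = 0 →
      ∀ X, f X = 0 := by
    intro f h1 h2 h3 X
    have hf : f = 0 := b.ext (by rintro (i | i | ⟨⟩) <;> simp [hbu, hbv, hbz, h1, h2, h3])
    rw [hf]; rfl
  -- determine nabla from Koszul by checking on basis vectors
  have nab : ∀ U V cand : H,
      (∀ i, 2 * ip cand (u i) =
        ip (bracket U V) (u i) - ip (bracket V (u i)) U + ip (bracket (u i) U) V) →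
      (∀ i, 2 * ip cand (v i) =
        ip (bracket U V) (v i) - ip (bracket V (v i)) U + ip (bracket (v i) U) V) →
      (2 * ip cand z = ip (bracket U V) z - ip (bracket V z) U + ip (bracket z U) V) →
      nabla U V = cand := by
    intro U V cand h1 h2 h3
    have heq : ∀ X, ip (nabla U V - cand) X = 0 := by
      intro X
      set f : H →ₗ[ℝ] ℝ := (2:ℝ) • ip cand - ip (bracket U V)
        + (ip.flip U) ∘ₗ (bracket V) - (ip.flip V) ∘ₗ (bracket.flip U) with hfdef
      have hfa : ∀ Y, f Y = 2 * ip cand Y -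
          (ip (bracket U V) Y - ip (bracket V Y) U + ip (bracket Y U) V) := by
        intro Y
        simp [hfdef, LinearMap.sub_apply, LinearMap.add_apply, LinearMap.smul_apply,
          LinearMap.comp_apply, LinearMap.flip_apply, smul_eq_mul]
        ring
      have h0 : f X = 0 := fzero f
        (fun i => by rw [hfa, h1 i]; ring)
        (fun i => by rw [hfa, h2 i]; ring)
        (by rw [hfa, h3]; ring) X
      rw [hfa] at h0
      have hk := hKoszul U V X
      have hs : ip (nabla U V - cand) X = ip (nabla U V) X - ip cand X := by
        simp [map_sub]
      rw [hs]; linarith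
    exact sub_eq_zero.mp (key0 _ heq)
  -- the nine covariant derivative computations
  have n_uu : ∀ i j, nabla (u i) (u j) = 0 := by
    intro i j
    apply nab <;> intros <;>
      simp [hbuu, hbuv, hbvu, hbuz, hbzu, ipite, map_neg, hipzu, hipzv, hipzz]
  have n_vv : ∀ i j, nabla (v i) (v j) = 0 := by
    intro i j
    apply nab <;> intros <;>
      simp [hbvv, hbuv, hbvu, hbvz, hbzv, ipite, map_neg, hipzu, hipzv, hipzz]
  have n_uv : ∀ i j, nabla (u i) (v j) = if i = j then (2⁻¹:ℝ) • z else 0 := by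
    intro i j
    apply nab
    · intro k
      simp [hbuv, hbvu, hbuu, ipite, map_neg, map_smul, smul_eq_mul, hipzu]
    · intro k
      simp [hbuv, hbvu, hbvv, ipite, map_neg, map_smul, smul_eq_mul, hipzv]
    · simp [hbuv, hbvz, hbzu, ipite, map_smul, smul_eq_mul, hipzz]
  have n_vu : ∀ i j, nabla (v i) (u j) = if i = j then (-(2⁻¹:ℝ)) • z else 0 := by
    intro i j
    apply nab
    · intro k
      simp [hbvu, hbuu, hbuv, ipite, map_neg, map_smul, smul_eq_mul, hipzu]
    · intro k
      simp [hbvu, hbvv, hbuv, ipite, map_neg, map_smul, smul_eq_mul, hipzv]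
    · rcases eq_or_ne i j with h | h
      · subst h
        simp [hbvu, hbuz, hbzv, ipite, map_neg, map_smul, smul_eq_mul, hipzz]
        try ring
      · simp [hbvu, hbuz, hbzv, h, Ne.symm h, ipite, map_neg, map_smul, smul_eq_mul]
  have n_uz : ∀ i, nabla (u i) z = (-(lam/(2*sigma i))) • v i := by
    intro i
    have hs := (hsigma i).ne'
    apply nab
    · intro k
      simp [hbuz, hbzu, hbuu, map_smul, smul_eq_mul, hipvu]
    · intro k
      rcases eq_or_ne i k with h | h
      · subst h
        simp [hbuz, hbzv, hbvu, ipite, map_neg, map_smul, smul_eq_mul, hipvv, hipzz]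
        field_simp
      · simp [hbuz, hbzv, hbvu, h, Ne.symm h, ipite, map_neg, map_smul, smul_eq_mul, hipvv]
    · simp [hbuz, hbzz, hbzu, map_smul, smul_eq_mul, hipvz]
  have n_zu : ∀ i, nabla z (u i) = (-(lam/(2*sigma i))) • v i := by
    intro i
    have hs := (hsigma i).ne'
    apply nab
    · intro k
      simp [hbzu, hbuu, hbuz, map_smul, smul_eq_mul, hipvu]
    · intro k
      rcases eq_or_ne i k with h | h
      · subst h
        simp [hbzu, hbuv, hbvz, ipite, map_neg, map_smul, smul_eq_mul, hipvv, hipzz]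
        field_simp
      · simp [hbzu, hbuv, hbvz, h, Ne.symm h, ipite, map_neg, map_smul, smul_eq_mul, hipvv]
    · simp [hbzu, hbuz, hbzz, map_smul, smul_eq_mul, hipvz]
  have n_vz : ∀ i, nabla (v i) z = (lam/(2*sigma i)) • u i := by
    intro i
    have hs := (hsigma i).ne'
    apply nab
    · intro k
      rcases eq_or_ne i k with h | h
      · subst h
        simp [hbvz, hbzu, hbuv, ipite, map_neg, map_smul, smul_eq_mul, hipuu, hipzz]
        field_simp
      · simp [hbvz, hbzu, hbuv, h, Ne.symm h, ipite, map_neg, map_smul, smul_eq_mul, hipuu]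
    · intro k
      simp [hbvz, hbzv, hbvv, map_smul, smul_eq_mul, hipuv]
    · simp [hbvz, hbzz, hbzv, map_smul, smul_eq_mul, hipuz]
  have n_zv : ∀ i, nabla z (v i) = (lam/(2*sigma i)) • u i := by
    intro i
    have hs := (hsigma i).ne'
    apply nab
    · intro k
      rcases eq_or_ne i k with h | h
      · subst h
        simp [hbzv, hbvu, hbuz, ipite, map_neg, map_smul, smul_eq_mul, hipuu, hipzz]
        field_simp
      · simp [hbzv, hbvu, hbuz, h, Ne.symm h, ipite, map_neg, map_smul, smul_eq_mul, hipuu]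
    · intro k
      simp [hbzv, hbvv, hbvz, map_smul, smul_eq_mul, hipuv]
    · simp [hbzv, hbvz, hbzz, map_smul, smul_eq_mul, hipuz]
  have n_zz : nabla z z = 0 := by
    apply nab <;> intros <;> simp [hbzz, hbzu, hbzv, hbuz, hbvz]
  -- curvature computations
  have Ruzz : ∀ i, R (u i) z z = (lam^2/(4*(sigma i)^2)) • u i := by
    intro i
    have hs := (hsigma i).ne'
    rw [hR, n_zz, hbuz, n_uz]
    simp only [map_zero, LinearMap.zero_apply, map_smul, n_zv, smul_smul,
      zero_sub, sub_zero]
    match_scalars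
    field_simp
    ring
  have Rzuu : ∀ k, R z (u k) (u k) = (lam/(4*sigma k)) • z := by
    intro k
    have hs := (hsigma k).ne'
    have e1 : nabla (u k) (v k) = (2⁻¹:ℝ) • z := by simp [n_uv]
    rw [hR, n_uu, n_zu, hbzu]
    simp only [map_zero, LinearMap.zero_apply, map_smul, e1, smul_smul,
      zero_sub, sub_zero]
    match_scalars
    field_simp
    try ring
    try tauto
  have Rzvv : ∀ k, R z (v k) (v k) = (lam/(4*sigma k)) • z := by
    intro k
    have hs := (hsigma k).ne'
    have e1 : nabla (v k) (u k) = (-(2⁻¹:ℝ)) • z := by simp [n_vu]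
    rw [hR, n_vv, n_zv, hbzv]
    simp only [map_zero, LinearMap.zero_apply, map_smul, e1, smul_smul,
      zero_sub, sub_zero]
    match_scalars
    field_simp
    try ring
    try tauto
  have Rzzz : R z z z = 0 := by
    rw [hR, hbzz]
    simp
  have Ruu : ∀ i k, R (u i) (u k) (u k) = 0 := by
    intro i k
    rw [hR, n_uu, n_uu, hbuu]
    simp
  have Ruvv : ∀ i k, R (u i) (v k) (v k) =
      (if i = k then -(3*lam/(4*sigma k)) else 0) • u k := by
    intro i k
    rcases eq_or_ne i k with h | h
    · subst h
      have hs := (hsigma i).ne'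
      have e1 : nabla (u i) (v i) = (2⁻¹:ℝ) • z := by simp [n_uv]
      have e2 : bracket (u i) (v i) = z := by simp [hbuv]
      rw [hR, n_vv, e1, e2]
      simp only [map_zero, LinearMap.zero_apply, map_smul, n_vz, n_zv, smul_smul,
        zero_sub, if_pos (rfl : i = i)]
      match_scalars
      field_simp
      simp only [↓reduceIte]
      field_simp
      ring
    · have e1 : nabla (u i) (v k) = 0 := by rw [n_uv, if_neg h]
      have e2 : bracket (u i) (v k) = 0 := by rw [hbuv, if_neg h]
      rw [hR, n_vv, e1, e2, if_neg h]
      simp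
  -- Ricci values
  have Riczz : Ric z z = ∑ k, lam^2/(2*(sigma k)^2) := by
    rw [hRic, Rzzz]
    simp only [map_zero, LinearMap.zero_apply, mul_zero, zero_add]
    apply Finset.sum_congr rfl
    intro k _
    rw [Rzuu, Rzvv, map_smul, LinearMap.smul_apply, smul_eq_mul, hipzz]
    have hs := (hsigma k).ne'
    field_simp
    ring
  have i0 : Fin n := ⟨0, hn⟩
  have Ricuu : Ric (u i0) (u i0) = -(lam/(2*sigma i0)) := by
    have hterm : ∀ k, (1/sigma k) * (ip (R (u i0) (u k) (u k)) (u i0)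
        + ip (R (u i0) (v k) (v k)) (u i0)) =
        if k = i0 then -(3*lam/(4*sigma i0)) else 0 := by
      intro k
      rw [Ruu, Ruvv, map_zero, LinearMap.zero_apply, map_smul, LinearMap.smul_apply,
        smul_eq_mul, hipuu]
      rcases eq_or_ne k i0 with h | h
      · subst h
        have hs := (hsigma k).ne'
        simp only [if_pos (rfl : k = k)]
        field_simp
        simp only [↓reduceIte]
        ring
      · rw [if_neg (Ne.symm h), if_neg h, if_neg h]
        ring
    rw [hRic, Ruzz, map_smul, LinearMap.smul_apply, smul_eq_mul, hipuu,
      if_pos (rfl : i0 = i0)]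
    rw [Finset.sum_congr rfl (fun k _ => hterm k), Finset.sum_ite_eq' Finset.univ i0
      (fun _ => -(3*lam/(4*sigma i0))), if_pos (Finset.mem_univ i0)]
    have hs := (hsigma i0).ne'
    have hl := hlam.ne'
    field_simp
    ring
  -- conclude
  have h1 := hc z z
  rw [Riczz, hipzz] at h1
  have h2 := hc (u i0) (u i0)
  rw [Ricuu, hipuu, if_pos (rfl : i0 = i0)] at h2
  have hS : 0 < ∑ k, lam^2/(2*(sigma k)^2) := by
    apply Finset.sum_pos
    · intro k _
      have := hsigma k
      positivity
    · exact ⟨i0, Finset.mem_univ i0⟩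
  have hcpos : 0 < c * lam := h1 ▸ hS
  have hcneg : c * sigma i0 < 0 := by
    rw [← h2]
    have h := hsigma i0
    have : 0 < lam / (2 * sigma i0) := by positivity
    linarith
  nlinarith [mul_pos hcpos (hsigma i0), mul_neg_of_neg_of_pos hcneg hlam]
end

section
/- If X ∈ 𝔥 satisfies ∇_U X = 0 for every U ∈ 𝔥, then X = 0. In particular, there is no nonzero left-invariant vector field Q on the Heisenberg group H_{2n+1} with ⟨Q,Q⟩ < 1 that is parallel with respect to the Levi-Civita connection, so H_{2n+1} admits no left-invariant Randers metric of Berwald type. -/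
theorem stmt_5
    {H : Type*} [AddCommGroup H] [Module ℝ H]
    (n : ℕ) (hn : 1 ≤ n)
    (u v : Fin n → H) (z : H)
    (b : Module.Basis (Fin n ⊕ Fin n ⊕ Unit) ℝ H)
    (hbu : ∀ i, b (Sum.inl i) = u i)
    (hbv : ∀ i, b (Sum.inr (Sum.inl i)) = v i)
    (hbz : b (Sum.inr (Sum.inr ())) = z)
    (bracket : H →ₗ[ℝ] H →ₗ[ℝ] H)
    (hbskew : ∀ X Y : H, bracket X Y = - bracket Y X)
    (hbuv : ∀ i j, bracket (u i) (v j) = if i = j then z else 0)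
    (hbuu : ∀ i j, bracket (u i) (u j) = 0)
    (hbvv : ∀ i j, bracket (v i) (v j) = 0)
    (hbuz : ∀ i, bracket (u i) z = 0)
    (hbvz : ∀ i, bracket (v i) z = 0)
    (lam : ℝ) (hlam : 0 < lam)
    (sigma : Fin n → ℝ) (hsigma : ∀ i, 0 < sigma i)
    (ip : H →ₗ[ℝ] H →ₗ[ℝ] ℝ)
    (hipsymm : ∀ X Y : H, ip X Y = ip Y X)
    (hippos : ∀ X : H, X ≠ 0 → 0 < ip X X)
    (hipuu : ∀ i j, ip (u i) (u j) = if i = j then sigma i else 0)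
    (hipvv : ∀ i j, ip (v i) (v j) = if i = j then sigma i else 0)
    (hipuv : ∀ i j, ip (u i) (v j) = 0)
    (hipuz : ∀ i, ip (u i) z = 0)
    (hipvz : ∀ i, ip (v i) z = 0)
    (hipzz : ip z z = lam)
    (nabla : H →ₗ[ℝ] H →ₗ[ℝ] H)
    (hKoszul : ∀ U V X : H, 2 * ip (nabla U V) X =
      ip (bracket U V) X - ip (bracket V X) U + ip (bracket X U) V)
    :
    (∀ X : H, (∀ U : H, nabla U X = 0) → X = 0) ∧
    ¬ ∃ Qv : H, Qv ≠ 0 ∧ ip Qv Qv < 1 ∧ ∀ U : H, nabla U Qv = 0 := by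
  -- bracket of anything with z is zero
  have hzz : bracket z z = 0 := by
    have h := hbskew z z
    have h2 : (2 : ℝ) • bracket z z = 0 := by
      rw [two_smul]; nth_rewrite 2 [h]; abel
    have := smul_eq_zero.mp h2
    simpa using this
  have hbrz : ∀ Y : H, bracket Y z = 0 := by
    have h0 : bracket.flip z = 0 := by
      apply b.ext
      rintro (i | i | ⟨⟩) <;>
        simp [LinearMap.flip_apply, hbu, hbv, hbz, hbuz, hbvz, hzz]
    intro Y
    have := LinearMap.congr_fun h0 Y
    simpa [LinearMap.flip_apply] using this
  have hbux : ∀ (j : Fin n) (X : H),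
      bracket (u j) X = (b.repr X (Sum.inr (Sum.inl j))) • z := by
    intro j X
    have h0 : bracket (u j) = (b.coord (Sum.inr (Sum.inl j))).smulRight z := by
      apply b.ext
      rintro (i | i | ⟨⟩)
      · simp only [LinearMap.smulRight_apply, Module.Basis.coord_apply,
          Module.Basis.repr_self, Finsupp.single_apply]
        rw [hbu]
        simp [hbuu]
      · simp only [LinearMap.smulRight_apply, Module.Basis.coord_apply,
          Module.Basis.repr_self, Finsupp.single_apply]
        rw [hbv, hbuv]
        rcases eq_or_ne j i with h | h
        · simp [h]
        · simp [h, h.symm]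
      · simp only [LinearMap.smulRight_apply, Module.Basis.coord_apply,
          Module.Basis.repr_self, Finsupp.single_apply]
        rw [hbz]
        simp [hbuz]
    rw [h0]; simp [Module.Basis.coord_apply]
  have hbvx : ∀ (j : Fin n) (X : H),
      bracket (v j) X = -((b.repr X (Sum.inl j)) • z) := by
    intro j X
    have h0 : bracket (v j) = -((b.coord (Sum.inl j)).smulRight z) := by
      apply b.ext
      rintro (i | i | ⟨⟩)
      · simp only [LinearMap.neg_apply, LinearMap.smulRight_apply,
          Module.Basis.coord_apply, Module.Basis.repr_self, Finsupp.single_apply]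
        rw [hbu, hbskew, hbuv]
        rcases eq_or_ne i j with h | h
        · simp [h]
        · simp [h, h.symm]
      · simp only [LinearMap.neg_apply, LinearMap.smulRight_apply,
          Module.Basis.coord_apply, Module.Basis.repr_self, Finsupp.single_apply]
        rw [hbv]
        simp [hbvv]
      · simp only [LinearMap.neg_apply, LinearMap.smulRight_apply,
          Module.Basis.coord_apply, Module.Basis.repr_self, Finsupp.single_apply]
        rw [hbz]
        simp [hbvz]
    rw [h0]; simp [Module.Basis.coord_apply]
  have hipzx : ∀ X : H, ip z X = lam * b.repr X (Sum.inr (Sum.inr ())) := by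
    intro X
    have h0 : ip z = lam • (b.coord (Sum.inr (Sum.inr ()))) := by
      apply b.ext
      rintro (i | i | ⟨⟩)
      · simp only [LinearMap.smul_apply, Module.Basis.coord_apply,
          Module.Basis.repr_self, Finsupp.single_apply]
        rw [hbu, hipsymm]
        simp [hipuz]
      · simp only [LinearMap.smul_apply, Module.Basis.coord_apply,
          Module.Basis.repr_self, Finsupp.single_apply]
        rw [hbv, hipsymm]
        simp [hipvz]
      · simp only [LinearMap.smul_apply, Module.Basis.coord_apply,
          Module.Basis.repr_self, Finsupp.single_apply]
        rw [hbz]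
        simp [hipzz]
    rw [h0]; simp [Module.Basis.coord_apply]
  have key : ∀ X : H, (∀ U : H, nabla U X = 0) → X = 0 := by
    intro X hX
    have heq : ∀ U W : H,
        ip (bracket U X) W - ip (bracket X W) U + ip (bracket W U) X = 0 := by
      intro U W
      have h := hKoszul U X W
      rw [hX U] at h
      simp at h
      linarith
    -- v-coordinates vanish
    have hv0 : ∀ j : Fin n, b.repr X (Sum.inr (Sum.inl j)) = 0 := by
      intro j
      have h := heq (u j) z
      rw [hbrz X, hbskew z (u j), hbuz j, hbux j X] at h
      simp [hipzz] at h
      rcases h with h | h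
      · exact h
      · exact absurd h (ne_of_gt hlam)
    -- u-coordinates vanish
    have hu0 : ∀ j : Fin n, b.repr X (Sum.inl j) = 0 := by
      intro j
      have h := heq (v j) z
      rw [hbrz X, hbskew z (v j), hbvz j, hbvx j X] at h
      simp [hipzz] at h
      rcases h with h | h
      · exact h
      · exact absurd h (ne_of_gt hlam)
    -- z-coordinate vanishes
    have hz0 : b.repr X (Sum.inr (Sum.inr ())) = 0 := by
      set j0 : Fin n := ⟨0, hn⟩
      have h := heq (u j0) (v j0)
      rw [hbux j0 X, hv0 j0, hbskew X (v j0), hbvx j0 X, hu0 j0,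
        hbskew (v j0) (u j0), hbuv j0 j0] at h
      simp [hipzx X] at h
      rcases h with h | h
      · exact absurd h (ne_of_gt hlam)
      · exact h
    have hrepr : b.repr X = 0 := by
      ext i
      rcases i with i | i | ⟨⟩
      · simpa using hu0 i
      · simpa using hv0 i
      · simpa using hz0
    have := b.repr.map_eq_zero_iff.mp (by simpa using hrepr)
    exact this
  refine ⟨key, ?_⟩
  rintro ⟨Q, hQ0, -, hQ⟩
  exact hQ0 (key Q hQ)
end

section
/- For the flag pole W = z/√λ, the curvature R̄ of the connection ∇̄ satisfies, for each 1 ≤ i ≤ n: R̄(u_i, W)W = (λ/(4σ_i²))(1+ξ)² u_i and R̄(v_i, W)W = (λ/(4σ_i²))(1+ξ)² v_i. -/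
lemma aux1 (A B C P Q : ℝ) (hA : 0 < A) :
    deriv (fun t : ℝ => (Real.sqrt (A + B*t + C*t^2) + (P + Q*t))^2) 0
      = 2*(Real.sqrt A + P)*(B/(2*Real.sqrt A) + Q) := by
  have h1 : HasDerivAt (fun t : ℝ => B * t) B 0 := by
    simpa using (hasDerivAt_id (0:ℝ)).const_mul B
  have h2 : HasDerivAt (fun t : ℝ => C * t^2) 0 0 := by
    simpa using (hasDerivAt_pow 2 (0:ℝ)).const_mul C
  have hq : HasDerivAt (fun t : ℝ => A + B*t + C*t^2) B 0 := by
    have h := (h1.const_add A).add h2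
    simp only [add_zero] at h
    exact h
  have hne : A + B*0 + C*0^2 ≠ 0 := by simp; positivity
  have hsq := hq.sqrt (by simpa using hne)
  have hlin : HasDerivAt (fun t : ℝ => P + Q*t) Q 0 := by
    simpa using ((hasDerivAt_id (0:ℝ)).const_mul Q).const_add P
  have hsum := (hsq.add hlin).pow 2
  rw [show deriv (fun t : ℝ => (Real.sqrt (A + B*t + C*t^2) + (P + Q*t))^2) 0 = _ from hsum.deriv]
  norm_num


lemma aux2 (a10 a01 a11 a20 a02 q0 q1 q2 : ℝ) :
    deriv (fun s : ℝ => deriv (fun t : ℝ =>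
        (Real.sqrt (1 + a10*s + a01*t + a11*(s*t) + a20*s^2 + a02*t^2)
          + (q0 + q1*s + q2*t))^2) 0) 0
    = 2*((a10/2+q1)*(a01/2+q2) + (1+q0)*(a11/2 - a01*a10/4)) := by
  have hcont : Continuous (fun s : ℝ => 1 + a10*s + a20*s^2) := by continuity
  have h0 : (0:ℝ) < 1 + a10*0 + a20*0^2 := by norm_num
  have hev : ∀ᶠ s in nhds (0:ℝ), 0 < 1 + a10*s + a20*s^2 :=
    hcont.continuousAt.eventually (eventually_gt_nhds h0)
  have hEq : (fun s : ℝ => deriv (fun t : ℝ =>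
        (Real.sqrt (1 + a10*s + a01*t + a11*(s*t) + a20*s^2 + a02*t^2)
          + (q0 + q1*s + q2*t))^2) 0)
      =ᶠ[nhds (0:ℝ)] (fun s : ℝ =>
        2*(Real.sqrt (1 + a10*s + a20*s^2) + (q0+q1*s))
          *((a01+a11*s)/(2*Real.sqrt (1 + a10*s + a20*s^2)) + q2)) := by
    filter_upwards [hev] with s hs
    have h := aux1 (1 + a10*s + a20*s^2) (a01+a11*s) a02 (q0+q1*s) q2 hs
    rw [← h]
    congr 1
    funext t
    rw [show 1 + a10*s + a01*t + a11*(s*t) + a20*s^2 + a02*t^2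
        = (1 + a10*s + a20*s^2) + (a01+a11*s)*t + a02*t^2 from by ring,
      show q0 + q1*s + q2*t = (q0+q1*s) + q2*t from by ring]
  rw [hEq.deriv_eq]
  -- now compute the derivative of the explicit function
  have h1 : HasDerivAt (fun s : ℝ => a10 * s) a10 0 := by
    simpa using (hasDerivAt_id (0:ℝ)).const_mul a10
  have h2 : HasDerivAt (fun s : ℝ => a20 * s^2) 0 0 := by
    simpa using (hasDerivAt_pow 2 (0:ℝ)).const_mul a20
  have hA : HasDerivAt (fun s : ℝ => 1 + a10*s + a20*s^2) a10 0 := by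
    have h := (h1.const_add 1).add h2
    simp only [add_zero] at h
    exact h
  have hAne : (1:ℝ) + a10*0 + a20*0^2 ≠ 0 := by norm_num
  have hsqA := hA.sqrt hAne
  have hv : (1:ℝ) + a10*0 + a20*0^2 = 1 := by norm_num
  rw [hv] at hsqA
  have hnum : HasDerivAt (fun s : ℝ => a01 + a11*s) a11 0 := by
    simpa using ((hasDerivAt_id (0:ℝ)).const_mul a11).const_add a01
  have hden : HasDerivAt (fun s : ℝ => 2*Real.sqrt (1 + a10*s + a20*s^2))
      (2*(a10/(2*Real.sqrt 1))) 0 := hsqA.const_mul 2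
  have hdne : 2*Real.sqrt (1 + a10*0 + a20*0^2) ≠ 0 := by
    rw [hv]; simp
  have hquot := hnum.div hden (by simpa [hv] using hdne)
  have hlin : HasDerivAt (fun s : ℝ => q0 + q1*s) q1 0 := by
    simpa using ((hasDerivAt_id (0:ℝ)).const_mul q1).const_add q0
  have hleft := hsqA.add hlin
  have hright := hquot.add_const q2
  have hfull := (hleft.mul hright).const_mul 2
  simp only [mul_assoc]
  rw [show deriv (fun s : ℝ => 2 * ((Real.sqrt (1 + a10*s + a20*s^2) + (q0 + q1*s)) *
      ((a01 + a11*s) / (2*Real.sqrt (1 + a10*s + a20*s^2)) + q2))) 0 = _ from hfull.deriv]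
  simp only [Pi.add_apply, Pi.div_apply]
  rw [hv, Real.sqrt_one]
  field_simp
  ring

set_option maxHeartbeats 1000000 in



theorem stmt_12
    {H : Type*} [AddCommGroup H] [Module ℝ H]
    (n : ℕ) (hn : 1 ≤ n)
    (u v : Fin n → H) (z : H)
    (b : Module.Basis (Fin n ⊕ Fin n ⊕ Unit) ℝ H)
    (hbu : ∀ i, b (Sum.inl i) = u i)
    (hbv : ∀ i, b (Sum.inr (Sum.inl i)) = v i)
    (hbz : b (Sum.inr (Sum.inr ())) = z)
    (bracket : H →ₗ[ℝ] H →ₗ[ℝ] H)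
    (hbskew : ∀ X Y : H, bracket X Y = - bracket Y X)
    (hbuv : ∀ i j, bracket (u i) (v j) = if i = j then z else 0)
    (hbuu : ∀ i j, bracket (u i) (u j) = 0)
    (hbvv : ∀ i j, bracket (v i) (v j) = 0)
    (hbuz : ∀ i, bracket (u i) z = 0)
    (hbvz : ∀ i, bracket (v i) z = 0)
    (lam : ℝ) (hlam : 0 < lam)
    (sigma : Fin n → ℝ) (hsigma : ∀ i, 0 < sigma i)
    (ip : H →ₗ[ℝ] H →ₗ[ℝ] ℝ)
    (hipsymm : ∀ X Y : H, ip X Y = ip Y X)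
    (hippos : ∀ X : H, X ≠ 0 → 0 < ip X X)
    (hipuu : ∀ i j, ip (u i) (u j) = if i = j then sigma i else 0)
    (hipvv : ∀ i j, ip (v i) (v j) = if i = j then sigma i else 0)
    (hipuv : ∀ i j, ip (u i) (v j) = 0)
    (hipuz : ∀ i, ip (u i) z = 0)
    (hipvz : ∀ i, ip (v i) z = 0)
    (hipzz : ip z z = lam)
    (xi : ℝ) (hxi0 : 0 < xi) (hxi1 : xi < 1)
    (Q : H) (hQ : Q = (xi / Real.sqrt lam) • z)
    (F : H → ℝ) (hF : ∀ y : H, F y = Real.sqrt (ip y y) + ip Q y)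
    (W : H) (hW : W = (1 / Real.sqrt lam) • z)
    (gW : H → H → ℝ)
    (hgW : ∀ X Y : H, gW X Y =
      deriv (fun s : ℝ => deriv (fun t : ℝ => (F (W + s • X + t • Y)) ^ 2) 0) 0 / 2)
    (nablaW : H →ₗ[ℝ] H →ₗ[ℝ] H)
    (hKoszulW : ∀ U V X : H, 2 * gW (nablaW U V) X =
      gW (bracket U V) X - gW (bracket V X) U + gW (bracket X U) V)
    (RW : H → H → H → H)
    (hRW : ∀ U V X : H, RW U V X =
      nablaW U (nablaW V X) - nablaW V (nablaW U X) - nablaW (bracket U V) X)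
    :
    ∀ i : Fin n,
      RW (u i) W W = ((lam / (4 * (sigma i) ^ 2)) * (1 + xi) ^ 2) • u i ∧
      RW (v i) W W = ((lam / (4 * (sigma i) ^ 2)) * (1 + xi) ^ 2) • v i := by
  intro i
  -- basic facts about sqrt lam
  set r := Real.sqrt lam with hr_def
  have hr : 0 < r := Real.sqrt_pos.mpr hlam
  have hr2 : r * r = lam := Real.mul_self_sqrt hlam.le
  -- symmetric / derived ip and bracket tables
  have hipvu : ∀ i j, ip (v i) (u j) = 0 := fun i j => by rw [hipsymm]; exact hipuv j i
  have hipzu : ∀ j, ip z (u j) = 0 := fun j => by rw [hipsymm]; exact hipuz j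
  have hipzv : ∀ j, ip z (v j) = 0 := fun j => by rw [hipsymm]; exact hipvz j
  have hbzu : ∀ j, bracket z (u j) = 0 := fun j => by rw [hbskew, hbuz, neg_zero]
  have hbzv : ∀ j, bracket z (v j) = 0 := fun j => by rw [hbskew, hbvz, neg_zero]
  have hbzz : bracket z z = 0 := by
    have h := hbskew z z
    have h2 : (2:ℝ) • bracket z z = 0 := by
      rw [two_smul]; nth_rewrite 2 [h]; simp
    simpa using (smul_eq_zero.mp h2).resolve_left (by norm_num)
  have hbvu : ∀ i j, bracket (v i) (u j) = if j = i then -z else 0 := by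
    intro i j
    rw [hbskew, hbuv]
    split_ifs <;> simp
  -- ip with W
  have ipWu : ∀ j, ip W (u j) = 0 := by
    intro j; rw [hW]; simp [map_smul, hipzu]
  have ipWv : ∀ j, ip W (v j) = 0 := by
    intro j; rw [hW]; simp [map_smul, hipzv]
  have ipWz : ip W z = r := by
    rw [hW]; simp only [map_smul, LinearMap.smul_apply, smul_eq_mul, hipzz]
    field_simp
    linarith [hr2]
  have ipWW : ip W W = 1 := by
    rw [hW]
    simp only [map_smul, LinearMap.smul_apply, smul_eq_mul, hipzz]
    field_simp
    linarith [hr2]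
  have hQW : Q = xi • W := by
    rw [hQ, hW, smul_smul]
    congr 1
    field_simp
  -- the key formula for gW
  have keyA : ∀ X Y : H, gW X Y
      = (1+xi) * ip X Y + (xi*(1+xi)) * (ip W X * ip W Y) := by
    intro X Y
    have h1 : ∀ s t : ℝ, ip (W + s • X + t • Y) (W + s • X + t • Y)
        = 1 + (2*ip W X)*s + (2*ip W Y)*t + (2*ip X Y)*(s*t)
          + (ip X X)*s^2 + (ip Y Y)*t^2 := by
      intro s t
      simp only [map_add, map_smul, LinearMap.add_apply, LinearMap.smul_apply, smul_eq_mul]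
      rw [ipWW, hipsymm X W, hipsymm Y W, hipsymm Y X]
      ring
    have h2 : ∀ s t : ℝ, ip Q (W + s • X + t • Y)
        = xi + (xi * ip W X)*s + (xi * ip W Y)*t := by
      intro s t
      rw [hQW]
      simp only [map_add, map_smul, LinearMap.add_apply, LinearMap.smul_apply, smul_eq_mul,
        ipWW]
      ring
    have hfun : (fun s : ℝ => deriv (fun t : ℝ => (F (W + s • X + t • Y))^2) 0)
        = (fun s : ℝ => deriv (fun t : ℝ =>
            (Real.sqrt (1 + (2*ip W X)*s + (2*ip W Y)*t + (2*ip X Y)*(s*t)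
              + (ip X X)*s^2 + (ip Y Y)*t^2)
            + (xi + (xi * ip W X)*s + (xi * ip W Y)*t))^2) 0) := by
      funext s
      congr 1
      funext t
      rw [hF, h1 s t, h2 s t]
    rw [hgW, hfun, aux2]
    ring
  -- gW of a difference
  have keySub : ∀ P C X : H, gW (P - C) X = gW P X - gW C X := by
    intro P C X
    simp only [keyA, map_sub, LinearMap.sub_apply]
    ring
  -- nondegeneracy
  have nondeg : ∀ D : H, (∀ j, gW D (b j) = 0) → D = 0 := by
    intro D h
    by_contra hne
    have hL : ((1+xi) • ip D + ((xi*(1+xi)) * ip W D) • ip W : H →ₗ[ℝ] ℝ) = 0 := by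
      apply b.ext
      intro j
      have hj := h j
      rw [keyA] at hj
      simp only [LinearMap.add_apply, LinearMap.smul_apply, smul_eq_mul,
        LinearMap.zero_apply]
      linarith
    have h3 := LinearMap.congr_fun hL D
    simp only [LinearMap.add_apply, LinearMap.smul_apply, smul_eq_mul,
      LinearMap.zero_apply] at h3
    have hp1 : 0 < ip D D := hippos D hne
    have ha : (0:ℝ) < (1 + xi) * ip D D := by nlinarith
    have hb : (0:ℝ) ≤ xi * (1 + xi) * (ip W D * ip W D) :=
      mul_nonneg (mul_nonneg hxi0.le (by linarith)) (mul_self_nonneg _)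
    nlinarith [ha, hb]
  -- the determination principle
  have determine : ∀ U V C : H,
      (∀ j, 2 * gW C (b j)
        = gW (bracket U V) (b j) - gW (bracket V (b j)) U + gW (bracket (b j) U) V) →
      nablaW U V = C := by
    intro U V C h
    have hD : ∀ j, gW (nablaW U V - C) (b j) = 0 := by
      intro j
      rw [keySub]
      have h1 := hKoszulW U V (b j)
      have h2 := h j
      linarith
    have := nondeg _ hD
    exact sub_eq_zero.mp this
  -- connection coefficients
  have fact_zz : nablaW z z = 0 := by
    apply determine
    intro j
    rcases j with k | k | _
    · rw [hbu]
      simp [keyA, hbzz, hbzu, hbuz, map_zero, hipzu, hipuz, ipWu, ipWz]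
    · rw [hbv]
      simp [keyA, hbzz, hbzv, hbvz, map_zero, hipzv, hipvz, ipWv, ipWz]
    · rw [hbz]
      simp [keyA, hbzz, map_zero]
  have fact_uz : ∀ i, nablaW (u i) z = (-((1+xi)*lam/(2*sigma i))) • v i := by
    intro i
    apply determine
    intro j
    rcases j with k | k | _
    · rw [hbu]
      simp [keyA, map_smul, map_neg, smul_eq_mul, hbuz, hbzu, hbuu,
        map_zero, hipvu, hipuu, hipuz, hipzu, ipWu, ipWv, ipWz]
    · rw [hbv]
      rcases eq_or_ne i k with h | h
      · subst h
        simp only [keyA, map_smul, map_neg, LinearMap.smul_apply, LinearMap.neg_apply,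
          smul_eq_mul, hbuz, hbzv, hbuv, hbvu, if_pos rfl, map_zero, LinearMap.zero_apply,
          hipvv, hipzz, hipvz, hipzv, ipWv, ipWz, ipWu]
        simp only [eq_self_iff_true, if_true, ite_true, map_neg, LinearMap.neg_apply, neg_neg,
          hipzz, ipWz, hipzu, hipzv, ipWu, ipWv, hipuz, hipvz]
        have hs := (hsigma i).ne'
        rw [← hr2]
        field_simp [hs]
        ring
      · simp only [keyA, map_smul, map_neg, LinearMap.smul_apply, LinearMap.neg_apply,
          smul_eq_mul, hbuz, hbzv, hbuv, hbvu, map_zero, LinearMap.zero_apply,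
          hipvv, hipzz, hipvz, hipzv, ipWv, ipWz, ipWu, if_neg h, if_neg (Ne.symm h)]
        ring
    · rw [hbz]
      simp [keyA, map_smul, map_neg, smul_eq_mul, hbuz, hbzz, hbuu, hbzu,
        map_zero, hipvz, hipzv, hipuz, hipzu, ipWu, ipWv, ipWz]
  have fact_vz : ∀ i, nablaW (v i) z = ((1+xi)*lam/(2*sigma i)) • u i := by
    intro i
    apply determine
    intro j
    rcases j with k | k | _
    · rw [hbu]
      rcases eq_or_ne k i with h | h
      · subst h
        simp only [keyA, map_smul, LinearMap.smul_apply, smul_eq_mul, hbvz, hbzu, hbuv,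
          if_pos rfl, map_zero, LinearMap.zero_apply, hipuu, hipzz, hipuz, hipzu,
          ipWu, ipWz, ipWv]
        simp only [eq_self_iff_true, if_true, ite_true, map_neg, LinearMap.neg_apply, neg_neg,
          hipzz, ipWz, hipzu, hipzv, ipWu, ipWv, hipuz, hipvz]
        have hs := (hsigma k).ne'
        rw [← hr2]
        field_simp [hs]
        ring
      · simp only [keyA, map_smul, LinearMap.smul_apply, smul_eq_mul, hbvz, hbzu, hbuv,
          map_zero, LinearMap.zero_apply, hipuu, hipzz, hipuz, hipzu,
          ipWu, ipWz, ipWv, if_neg h, if_neg (Ne.symm h)]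
        ring
    · rw [hbv]
      simp [keyA, map_smul, smul_eq_mul, hbvz, hbzv, hbvv,
        map_zero, hipuv, hipuu, hipuz, hipzv, ipWu, ipWv, ipWz]
    · rw [hbz]
      simp [keyA, map_smul, smul_eq_mul, hbvz, hbzz, hbvv, hbzv,
        map_zero, hipuz, hipzu, hipvz, hipzv, ipWu, ipWv, ipWz]
  have fact_zu : ∀ i, nablaW z (u i) = (-((1+xi)*lam/(2*sigma i))) • v i := by
    intro i
    apply determine
    intro j
    rcases j with k | k | _
    · rw [hbu]
      simp [keyA, map_smul, map_neg, smul_eq_mul, hbzu, hbuu, hbuz,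
        map_zero, hipvu, hipuz, hipzu, ipWu, ipWv, ipWz]
    · rw [hbv]
      rcases eq_or_ne i k with h | h
      · subst h
        simp only [keyA, map_smul, map_neg, LinearMap.smul_apply, LinearMap.neg_apply,
          smul_eq_mul, hbzu, hbuv, if_pos rfl, hbvz, map_zero, LinearMap.zero_apply,
          hipvv, hipzz, hipvz, hipzv, ipWv, ipWz, ipWu]
        simp only [eq_self_iff_true, if_true, ite_true, map_neg, LinearMap.neg_apply, neg_neg,
          hipzz, ipWz, hipzu, hipzv, ipWu, ipWv, hipuz, hipvz]
        have hs := (hsigma i).ne'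
        rw [← hr2]
        field_simp [hs]
        ring
      · simp only [keyA, map_smul, map_neg, LinearMap.smul_apply, LinearMap.neg_apply,
          smul_eq_mul, hbzu, hbuv, hbvz, map_zero, LinearMap.zero_apply,
          hipvv, hipzz, hipvz, hipzv, ipWv, ipWz, ipWu, if_neg h, if_neg (Ne.symm h)]
        ring
    · rw [hbz]
      simp [keyA, map_smul, map_neg, smul_eq_mul, hbzu, hbzz, hbuz,
        map_zero, hipvz, hipzv, hipuz, hipzu, ipWu, ipWv, ipWz]
  have fact_zv : ∀ i, nablaW z (v i) = ((1+xi)*lam/(2*sigma i)) • u i := by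
    intro i
    apply determine
    intro j
    rcases j with k | k | _
    · rw [hbu]
      rcases eq_or_ne k i with h | h
      · subst h
        simp only [keyA, map_smul, LinearMap.smul_apply, smul_eq_mul, hbzv, hbvu,
          if_pos rfl, map_neg, LinearMap.neg_apply, hbuz, map_zero, LinearMap.zero_apply,
          hipuu, hipzz, hipuz, hipzu, ipWu, ipWz, ipWv]
        simp only [eq_self_iff_true, if_true, ite_true, map_neg, LinearMap.neg_apply, neg_neg,
          hipzz, ipWz, hipzu, hipzv, ipWu, ipWv, hipuz, hipvz]
        have hs := (hsigma k).ne'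
        rw [← hr2]
        field_simp [hs]
        ring
      · simp only [keyA, map_smul, LinearMap.smul_apply, smul_eq_mul, hbzv, hbvu, hbuz,
          map_neg, LinearMap.neg_apply, map_zero, LinearMap.zero_apply,
          hipuu, hipzz, hipuz, hipzu, ipWu, ipWz, ipWv, if_neg h, if_neg (Ne.symm h)]
        ring
    · rw [hbv]
      simp [keyA, map_smul, smul_eq_mul, hbzv, hbvv, hbvz,
        map_zero, hipuv, hipuz, hipzv, ipWu, ipWv, ipWz]
    · rw [hbz]
      simp [keyA, map_smul, smul_eq_mul, hbzv, hbzz, hbvz,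
        map_zero, hipuz, hipzu, hipvz, hipzv, ipWu, ipWv, ipWz]
  -- assemble the curvature
  set c : ℝ := (1+xi)*lam/(2*sigma i) with hc_def
  have hsne := (hsigma i).ne'
  constructor
  · rw [hRW]
    have hbW : bracket (u i) W = 0 := by
      rw [hW, map_smul, hbuz, smul_zero]
    have h00 : nablaW W W = 0 := by
      rw [hW]
      simp only [map_smul, LinearMap.smul_apply, fact_zz, smul_zero]
    have h1 : nablaW (u i) W = ((1/r) * (-c)) • v i := by
      rw [hW]
      simp only [map_smul, fact_uz i, smul_smul, neg_smul, smul_neg, mul_neg]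
      rw [← hc_def]
    have h2 : nablaW W (((1/r) * (-c)) • v i) = ((1/r) * ((1/r) * (-c) * c)) • u i := by
      rw [hW]
      simp only [map_smul, LinearMap.smul_apply, fact_zv i, smul_smul]
      module
    rw [h00, h1, h2, hbW, map_zero, map_zero, LinearMap.zero_apply]
    rw [zero_sub, sub_zero, ← neg_smul]
    congr 1
    rw [hc_def, ← hr2]
    field_simp
    ring
  · rw [hRW]
    have hbW : bracket (v i) W = 0 := by
      rw [hW, map_smul, hbvz, smul_zero]
    have h00 : nablaW W W = 0 := by
      rw [hW]
      simp only [map_smul, LinearMap.smul_apply, fact_zz, smul_zero]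
    have h1 : nablaW (v i) W = ((1/r) * c) • u i := by
      rw [hW]
      simp only [map_smul, fact_vz i, smul_smul]
      rw [← hc_def]
    have h2 : nablaW W (((1/r) * c) • u i) = ((1/r) * ((1/r) * c * (-c))) • v i := by
      rw [hW]
      simp only [map_smul, LinearMap.smul_apply, fact_zu i, smul_smul]
      module
    rw [h00, h1, h2, hbW, map_zero, map_zero, LinearMap.zero_apply]
    rw [zero_sub, sub_zero, ← neg_smul]
    congr 1
    rw [hc_def, ← hr2]
    field_simp
    ring
end

section
/- For the flag pole W = z/√λ, the flag curvature of every flag containing W is strictly positive: for every nonzero U = Σ_{i=1}^n (a_i u_i + b_i v_i) ∈ 𝔥, one has g_W(R̄(U,W)W, U) / (g_W(W,W) g_W(U,U) − g_W(U,W)²) > 0. -/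
lemma quadDeriv (c0 c1 c2 x : ℝ) : HasDerivAt (fun t : ℝ => c0 + c1*t + c2*t^2) (c1 + 2*c2*x) x := by
  have h1 : HasDerivAt (fun t : ℝ => c1*t) (c1*1) x := (hasDerivAt_id x).const_mul c1
  have h2 : HasDerivAt (fun t : ℝ => c2*t^2) (c2*(2*x^1)) x := (hasDerivAt_pow 2 x).const_mul c2
  have := ((hasDerivAt_const x c0).add h1).add h2
  exact this.congr_deriv (by ring)

lemma sqrtQuadDeriv (c0 c1 c2 x : ℝ) (h : 0 < c0 + c1*x + c2*x^2) :
    HasDerivAt (fun t : ℝ => Real.sqrt (c0 + c1*t + c2*t^2))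
      ((c1 + 2*c2*x)/(2*Real.sqrt (c0 + c1*x + c2*x^2))) x := by
  have := (Real.hasDerivAt_sqrt (ne_of_gt h)).comp x (quadDeriv c0 c1 c2 x)
  exact this.congr_deriv (by ring)

lemma innerDeriv (wX wY xX yY p q s : ℝ) (hs : 0 < 1+2*s*wX+s^2*xX) :
    deriv (fun t : ℝ => (Real.sqrt (1 + 2*s*wX + 2*t*wY + s^2*xX + 2*(s*t)*p + t^2*yY)
        + (q + s*(q*wX) + t*(q*wY)))^2) 0
    = 2*(Real.sqrt (1+2*s*wX+s^2*xX) + (q + s*(q*wX))) *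
        ((wY + s*p)/Real.sqrt (1+2*s*wX+s^2*xX) + q*wY) := by
  have hc0 : (0:ℝ) < (1+2*s*wX+s^2*xX) + (2*wY+2*s*p)*0 + yY*0^2 := by
    simpa using hs
  have hroot := sqrtQuadDeriv (1+2*s*wX+s^2*xX) (2*wY+2*s*p) yY 0 hc0
  have hroot' : HasDerivAt (fun t : ℝ => Real.sqrt (1 + 2*s*wX + 2*t*wY + s^2*xX + 2*(s*t)*p + t^2*yY))
      ((2*wY+2*s*p)/(2*Real.sqrt (1+2*s*wX+s^2*xX))) 0 := by
    have heq : (fun t : ℝ => Real.sqrt (1 + 2*s*wX + 2*t*wY + s^2*xX + 2*(s*t)*p + t^2*yY))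
        = (fun t : ℝ => Real.sqrt ((1+2*s*wX+s^2*xX) + (2*wY+2*s*p)*t + yY*t^2)) := by
      funext t; ring_nf
    rw [heq]
    convert hroot using 2 <;> ring
  have hlin : HasDerivAt (fun t : ℝ => q + s*(q*wX) + t*(q*wY)) (q*wY) 0 := by
    have := ((hasDerivAt_const (0:ℝ) (q + s*(q*wX)))).add ((hasDerivAt_id (0:ℝ)).mul_const (q*wY))
    exact this.congr_deriv (by ring)
  have hsum := (hroot'.add hlin).pow 2
  have hval := hsum.deriv
  erw [hval]; simp only [Pi.add_apply]
  have hAs : Real.sqrt (1+2*s*wX+s^2*xX) ≠ 0 := by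
    positivity
  have h00 : (1:ℝ) + 2*s*wX + 2*0*wY + s^2*xX + 2*(s*0)*p + 0^2*yY = 1+2*s*wX+s^2*xX := by ring
  rw [h00]
  field_simp
  ring

lemma outerDeriv (wX wY xX p q : ℝ) :
    deriv (fun s : ℝ => 2*(Real.sqrt (1+2*s*wX+s^2*xX) + (q + s*(q*wX))) *
        ((wY + s*p)/Real.sqrt (1+2*s*wX+s^2*xX) + q*wY)) 0
    = 2*((1+q)*p + q*(1+q)*(wX*wY)) := by
  have hc0 : (0:ℝ) < 1 + (2*wX)*0 + xX*0^2 := by norm_num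
  have hroot := sqrtQuadDeriv 1 (2*wX) xX 0 hc0
  have hA0 : (1:ℝ) + (2*wX)*0 + xX*0^2 = 1 := by ring
  rw [hA0] at hroot
  have hroot' : HasDerivAt (fun s : ℝ => Real.sqrt (1+2*s*wX+s^2*xX)) wX 0 := by
    have heq : (fun s : ℝ => Real.sqrt (1+2*s*wX+s^2*xX))
        = (fun s : ℝ => Real.sqrt (1 + (2*wX)*s + xX*s^2)) := by funext s; ring_nf
    rw [heq]
    convert hroot using 1
    rw [Real.sqrt_one]; ring
  have hlin : HasDerivAt (fun s : ℝ => q + s*(q*wX)) (q*wX) 0 := by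
    have := (hasDerivAt_const (0:ℝ) q).add ((hasDerivAt_id (0:ℝ)).mul_const (q*wX))
    exact this.congr_deriv (by ring)
  have hg1 : HasDerivAt (fun s : ℝ => Real.sqrt (1+2*s*wX+s^2*xX) + (q + s*(q*wX)))
      (wX + q*wX) 0 := hroot'.add hlin
  have hnum : HasDerivAt (fun s : ℝ => wY + s*p) p 0 := by
    have := (hasDerivAt_const (0:ℝ) wY).add ((hasDerivAt_id (0:ℝ)).mul_const p)
    exact this.congr_deriv (by ring)
  have hA00 : (1:ℝ)+2*0*wX+0^2*xX = 1 := by ring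
  have hsne : Real.sqrt ((1:ℝ)+2*0*wX+0^2*xX) ≠ 0 := by rw [hA00, Real.sqrt_one]; norm_num
  have hdiv : HasDerivAt (fun s : ℝ => (wY + s*p)/Real.sqrt (1+2*s*wX+s^2*xX))
      ((p * Real.sqrt ((1:ℝ)+2*0*wX+0^2*xX) - (wY + 0*p) * wX) / (Real.sqrt ((1:ℝ)+2*0*wX+0^2*xX))^2) 0 :=
    hnum.div hroot' hsne
  have hg2 : HasDerivAt (fun s : ℝ => (wY + s*p)/Real.sqrt (1+2*s*wX+s^2*xX) + q*wY)
      (p - wY*wX) 0 := by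
    have := hdiv.add (hasDerivAt_const (0:ℝ) (q*wY))
    refine this.congr_deriv ?_
    rw [hA00, Real.sqrt_one]; ring
  have hfull := ((hg1.const_mul 2).mul hg2).deriv
  erw [hfull]
  rw [hA00, Real.sqrt_one]
  ring

lemma auxDeriv (wX wY xX yY p q : ℝ) :
    deriv (fun s : ℝ => deriv (fun t : ℝ =>
      (Real.sqrt (1 + 2*s*wX + 2*t*wY + s^2*xX + 2*(s*t)*p + t^2*yY)
        + (q + s*(q*wX) + t*(q*wY)))^2) 0) 0 / 2
    = (1+q)*p + q*(1+q)*(wX*wY) := by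
  have hcont : ContinuousAt (fun s : ℝ => 1+2*s*wX+s^2*xX) 0 := by fun_prop
  have h1 : (0:ℝ) < 1+2*(0:ℝ)*wX+(0:ℝ)^2*xX := by norm_num
  have hev : ∀ᶠ s in nhds (0:ℝ), 0 < 1+2*s*wX+s^2*xX :=
    hcont.eventually (eventually_gt_nhds h1)
  have heq : (fun s : ℝ => deriv (fun t : ℝ =>
      (Real.sqrt (1 + 2*s*wX + 2*t*wY + s^2*xX + 2*(s*t)*p + t^2*yY)
        + (q + s*(q*wX) + t*(q*wY)))^2) 0)
      =ᶠ[nhds (0:ℝ)] (fun s : ℝ => 2*(Real.sqrt (1+2*s*wX+s^2*xX) + (q + s*(q*wX))) *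
        ((wY + s*p)/Real.sqrt (1+2*s*wX+s^2*xX) + q*wY)) := by
    filter_upwards [hev] with s hs
    exact innerDeriv wX wY xX yY p q s hs
  rw [heq.deriv_eq, outerDeriv]
  ring

set_option maxHeartbeats 1600000 in
theorem stmt_14
    {H : Type*} [AddCommGroup H] [Module ℝ H]
    (n : ℕ) (hn : 1 ≤ n)
    (u v : Fin n → H) (z : H)
    (b : Module.Basis (Fin n ⊕ Fin n ⊕ Unit) ℝ H)
    (hbu : ∀ i, b (Sum.inl i) = u i)
    (hbv : ∀ i, b (Sum.inr (Sum.inl i)) = v i)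
    (hbz : b (Sum.inr (Sum.inr ())) = z)
    (bracket : H →ₗ[ℝ] H →ₗ[ℝ] H)
    (hbskew : ∀ X Y : H, bracket X Y = - bracket Y X)
    (hbuv : ∀ i j, bracket (u i) (v j) = if i = j then z else 0)
    (hbuu : ∀ i j, bracket (u i) (u j) = 0)
    (hbvv : ∀ i j, bracket (v i) (v j) = 0)
    (hbuz : ∀ i, bracket (u i) z = 0)
    (hbvz : ∀ i, bracket (v i) z = 0)
    (lam : ℝ) (hlam : 0 < lam)
    (sigma : Fin n → ℝ) (hsigma : ∀ i, 0 < sigma i)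
    (ip : H →ₗ[ℝ] H →ₗ[ℝ] ℝ)
    (hipsymm : ∀ X Y : H, ip X Y = ip Y X)
    (hippos : ∀ X : H, X ≠ 0 → 0 < ip X X)
    (hipuu : ∀ i j, ip (u i) (u j) = if i = j then sigma i else 0)
    (hipvv : ∀ i j, ip (v i) (v j) = if i = j then sigma i else 0)
    (hipuv : ∀ i j, ip (u i) (v j) = 0)
    (hipuz : ∀ i, ip (u i) z = 0)
    (hipvz : ∀ i, ip (v i) z = 0)
    (hipzz : ip z z = lam)
    (xi : ℝ) (hxi0 : 0 < xi) (hxi1 : xi < 1)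
    (Q : H) (hQ : Q = (xi / Real.sqrt lam) • z)
    (F : H → ℝ) (hF : ∀ y : H, F y = Real.sqrt (ip y y) + ip Q y)
    (W : H) (hW : W = (1 / Real.sqrt lam) • z)
    (gW : H → H → ℝ)
    (hgW : ∀ X Y : H, gW X Y =
      deriv (fun s : ℝ => deriv (fun t : ℝ => (F (W + s • X + t • Y)) ^ 2) 0) 0 / 2)
    (nablaW : H →ₗ[ℝ] H →ₗ[ℝ] H)
    (hKoszulW : ∀ U V X : H, 2 * gW (nablaW U V) X =
      gW (bracket U V) X - gW (bracket V X) U + gW (bracket X U) V)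
    (RW : H → H → H → H)
    (hRW : ∀ U V X : H, RW U V X =
      nablaW U (nablaW V X) - nablaW V (nablaW U X) - nablaW (bracket U V) X)
    :
    ∀ a c : Fin n → ℝ,
      (∑ i, (a i • u i + c i • v i)) ≠ 0 →
      0 < gW (RW (∑ i, (a i • u i + c i • v i)) W W) (∑ i, (a i • u i + c i • v i)) /
        (gW W W * gW (∑ i, (a i • u i + c i • v i)) (∑ i, (a i • u i + c i • v i)) -
          (gW (∑ i, (a i • u i + c i • v i)) W) ^ 2) := by
  -- basic constants
  set sq : ℝ := Real.sqrt lam with hsqdef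
  have hsq : 0 < sq := Real.sqrt_pos.mpr hlam
  have hsq2 : sq * sq = lam := Real.mul_self_sqrt hlam.le
  have hxip : (0:ℝ) < 1 + xi := by linarith
  -- inner product facts
  have hipW : ∀ X : H, ip W X = (1/sq) * ip z X := by
    intro X; rw [hW]; simp [map_smul, LinearMap.smul_apply, smul_eq_mul]
  have hipzW : ip z W = sq := by
    rw [hipsymm, hipW, hipzz]; field_simp
    linear_combination -hsq2
  have hWW : ip W W = 1 := by
    rw [hipW, hipzW]; field_simp
  have hipQ : ∀ X : H, ip Q X = xi * ip W X := by
    intro X; rw [hQ, hipW]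
    simp [map_smul, LinearMap.smul_apply, smul_eq_mul]
    ring
  have hipQW : ip Q W = xi := by rw [hipQ, hWW, mul_one]
  -- the osculating metric formula
  have hG : ∀ X Y : H, gW X Y = (1+xi) * ip X Y + xi*(1+xi)*(ip W X * ip W Y) := by
    intro X Y
    rw [hgW]
    have hfun : (fun s : ℝ => deriv (fun t : ℝ => (F (W + s • X + t • Y)) ^ 2) 0)
        = (fun s : ℝ => deriv (fun t : ℝ =>
          (Real.sqrt (1 + 2*s*(ip W X) + 2*t*(ip W Y) + s^2*(ip X X) + 2*(s*t)*(ip X Y) + t^2*(ip Y Y))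
            + (xi + s*(xi*(ip W X)) + t*(xi*(ip W Y))))^2) 0) := by
      funext s; congr 1; funext t
      rw [hF]
      have hip1 : ip (W + s • X + t • Y) (W + s • X + t • Y)
          = 1 + 2*s*(ip W X) + 2*t*(ip W Y) + s^2*(ip X X) + 2*(s*t)*(ip X Y) + t^2*(ip Y Y) := by
        simp only [map_add, map_smul, LinearMap.add_apply, LinearMap.smul_apply, smul_eq_mul]
        rw [hipsymm X W, hipsymm Y W, hipsymm Y X, hWW]
        ring
      have hip2 : ip Q (W + s • X + t • Y) = xi + s*(xi*(ip W X)) + t*(xi*(ip W Y)) := by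
        simp only [map_add, map_smul, smul_eq_mul]
        rw [hipQ X, hipQ Y, hipQW]
      rw [hip1, hip2]
    rw [hfun, auxDeriv]
  -- gW linearity helpers
  have hGsmul1 : ∀ (r : ℝ) (X Y : H), gW (r • X) Y = r * gW X Y := by
    intro r X Y; simp only [hG, map_smul, LinearMap.smul_apply, smul_eq_mul]; ring
  have hGsmul2 : ∀ (r : ℝ) (X Y : H), gW X (r • Y) = r * gW X Y := by
    intro r X Y; simp only [hG, map_smul, LinearMap.smul_apply, smul_eq_mul]; ring
  have hGadd1 : ∀ (X X' Y : H), gW (X + X') Y = gW X Y + gW X' Y := by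
    intro X X' Y; simp only [hG, map_add, LinearMap.add_apply]; ring
  have hGsub1 : ∀ (X X' Y : H), gW (X - X') Y = gW X Y - gW X' Y := by
    intro X X' Y; simp only [hG, map_sub, LinearMap.sub_apply]; ring
  have hGzero1 : ∀ Y : H, gW 0 Y = 0 := by
    intro Y; simp only [hG, map_zero, LinearMap.zero_apply]; ring
  have hGneg1 : ∀ X Y : H, gW (-X) Y = - gW X Y := by
    intro X Y; simp only [hG, map_neg, LinearMap.neg_apply]; ring
  have hGsum1 : ∀ {κ : Type} (m : Finset κ) (f : κ → H) (Y : H),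
      gW (∑ j ∈ m, f j) Y = ∑ j ∈ m, gW (f j) Y := by
    intro κ m f Y
    simp only [hG, map_sum, LinearMap.sum_apply, Finset.sum_mul, Finset.mul_sum,
      Finset.sum_add_distrib]
  have hGsum2 : ∀ {κ : Type} (m : Finset κ) (f : κ → H) (X : H),
      gW X (∑ j ∈ m, f j) = ∑ j ∈ m, gW X (f j) := by
    intro κ m f X
    simp only [hG, map_sum, Finset.mul_sum, Finset.sum_add_distrib]
  have hGsym : ∀ X Y : H, gW X Y = gW Y X := by
    intro X Y; simp only [hG]; rw [hipsymm X Y]; ring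
  -- positivity / nondegeneracy
  have hGpos : ∀ X : H, X ≠ 0 → 0 < gW X X := by
    intro X hX
    rw [hG]
    have h1 := mul_pos hxip (hippos X hX)
    have h2 := mul_nonneg (mul_nonneg hxi0.le hxip.le) (mul_self_nonneg (ip W X))
    nlinarith [h1, h2]
  have hGzero : ∀ E : H, (∀ j, gW E (b j) = 0) → E = 0 := by
    intro E h
    by_contra hne
    have hEE : gW E E = 0 := by
      nth_rewrite 2 [← b.sum_repr E]
      have : ∀ j, gW E (b.repr E j • b j) = 0 := by
        intro j; rw [hGsmul2, h j, mul_zero]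
      rw [hGsum2]
      exact Finset.sum_eq_zero (fun j _ => this j)
    exact absurd hEE (ne_of_gt (hGpos E hne))
  -- bracket facts
  have hbzz : bracket z z = 0 := by
    have h := hbskew z z
    have h2 : bracket z z + bracket z z = 0 := by nth_rewrite 2 [h]; simp
    have h3 : (2:ℝ) • bracket z z = 0 := by rw [two_smul]; exact h2
    simpa using (smul_eq_zero.mp h3).resolve_left (by norm_num)
  have hbz0 : ∀ X : H, bracket z X = 0 := by
    have : bracket z = 0 := by
      apply b.ext
      rintro (i | i | ⟨⟩)
      · rw [hbu, hbskew z (u i), hbuz, neg_zero, LinearMap.zero_apply]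
      · rw [hbv, hbskew z (v i), hbvz, neg_zero, LinearMap.zero_apply]
      · rw [hbz, hbzz, LinearMap.zero_apply]
    intro X; rw [this, LinearMap.zero_apply]
  have hbW1 : ∀ X : H, bracket W X = 0 := by
    intro X; rw [hW]
    simp [map_smul, LinearMap.smul_apply, hbz0]
  have hbW2 : ∀ X : H, bracket X W = 0 := by
    intro X; rw [hbskew, hbW1, neg_zero]
  -- more ip values
  have hipzu : ∀ i, ip z (u i) = 0 := fun i => by rw [hipsymm]; exact hipuz i
  have hipzv : ∀ i, ip z (v i) = 0 := fun i => by rw [hipsymm]; exact hipvz i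
  have hipvu : ∀ i j, ip (v i) (u j) = 0 := fun i j => by rw [hipsymm]; exact hipuv j i
  have hipWu : ∀ i, ip W (u i) = 0 := fun i => by rw [hipW, hipzu, mul_zero]
  have hipWv : ∀ i, ip W (v i) = 0 := fun i => by rw [hipW, hipzv, mul_zero]
  have hipWz : ip W z = sq := by rw [hipsymm]; exact hipzW
  -- gW basis values
  have hgWzz : gW z z = (1+xi)^2*lam := by
    rw [hG, hipzz, hipWz]
    nlinarith [hsq2]
  have hgWWz : gW W W = (1+xi)^2 := by
    rw [hG, hWW]; ring
  have hgWuu : ∀ i j, gW (u i) (u j) = (1+xi) * (if i = j then sigma i else 0) := by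
    intro i j; rw [hG, hipuu, hipWu, hipWu]; ring
  have hgWvv : ∀ i j, gW (v i) (v j) = (1+xi) * (if i = j then sigma i else 0) := by
    intro i j; rw [hG, hipvv, hipWv, hipWv]; ring
  have hgWuv : ∀ i j, gW (u i) (v j) = 0 := by
    intro i j; rw [hG, hipuv, hipWu, hipWv]; ring
  have hgWvu : ∀ i j, gW (v i) (u j) = 0 := by
    intro i j; rw [hG, hipvu, hipWu, hipWv]; ring
  have hgWuz : ∀ i, gW (u i) z = 0 := by
    intro i; rw [hG, hipuz, hipWu]; ring
  have hgWvz : ∀ i, gW (v i) z = 0 := by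
    intro i; rw [hG, hipvz, hipWv]; ring
  have hgWzu : ∀ i, gW z (u i) = 0 := fun i => by rw [hGsym]; exact hgWuz i
  have hgWzv : ∀ i, gW z (v i) = 0 := fun i => by rw [hGsym]; exact hgWvz i
  -- ∇_W W = 0
  have hnWW : nablaW W W = 0 := by
    have hk : ∀ X : H, gW (nablaW W W) X = 0 := by
      intro X
      have h := hKoszulW W W X
      rw [hbW1 W, hbW1 X, hbW2 X] at h
      simp only [hGzero1] at h
      linarith
    by_contra hne
    exact absurd (hk (nablaW W W)) (ne_of_gt (hGpos _ hne))
  -- ∇_z (u j) and ∇_z (v j)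
  have hbvu : ∀ i j, bracket (v i) (u j) = -(if j = i then z else 0) := by
    intro i j; rw [hbskew, hbuv]
  have keyzu : ∀ j, ∀ X : H, 2 * gW (nablaW z (u j)) X = - gW (bracket (u j) X) z := by
    intro j X
    have h := hKoszulW z (u j) X
    rw [hbz0 (u j), hbskew X z, hbz0 X, neg_zero] at h
    simp only [hGzero1] at h
    linarith
  have keyzv : ∀ j, ∀ X : H, 2 * gW (nablaW z (v j)) X = - gW (bracket (v j) X) z := by
    intro j X
    have h := hKoszulW z (v j) X
    rw [hbz0 (v j), hbskew X z, hbz0 X, neg_zero] at h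
    simp only [hGzero1] at h
    linarith
  have hnzu : ∀ j, nablaW z (u j) = (-(((1+xi)*lam)/(2*sigma j))) • v j := by
    intro j
    apply sub_eq_zero.mp
    apply hGzero
    rintro (k | k | ⟨⟩)
    · rw [hbu, hGsub1, hGsmul1, hgWvu]
      have h1 := keyzu j (u k)
      rw [hbuu] at h1
      rw [hGzero1] at h1
      linarith
    · rw [hbv, hGsub1, hGsmul1, hgWvv]
      have h1 := keyzu j (v k)
      rw [hbuv] at h1
      by_cases hjk : j = k
      · subst hjk
        rw [if_pos rfl] at h1
        rw [hgWzz] at h1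
        rw [if_pos rfl]
        have hσ' : sigma j ≠ 0 := ne_of_gt (hsigma j)
        field_simp
        linear_combination h1
      · rw [if_neg hjk] at h1
        rw [hGzero1] at h1
        rw [if_neg hjk]
        linarith
    · rw [hbz, hGsub1, hGsmul1, hgWvz]
      have h1 := keyzu j z
      rw [hbuz] at h1
      rw [hGzero1] at h1
      linarith
  have hnzv : ∀ j, nablaW z (v j) = ((((1+xi)*lam)/(2*sigma j))) • u j := by
    intro j
    apply sub_eq_zero.mp
    apply hGzero
    rintro (k | k | ⟨⟩)
    · rw [hbu, hGsub1, hGsmul1, hgWuu]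
      have h1 := keyzv j (u k)
      rw [hbvu] at h1
      by_cases hjk : j = k
      · subst hjk
        rw [if_pos rfl, hGneg1, hgWzz] at h1
        rw [if_pos rfl]
        have hσ' : sigma j ≠ 0 := ne_of_gt (hsigma j)
        field_simp
        linear_combination h1
      · rw [if_neg (fun h => hjk h.symm), neg_zero, hGzero1] at h1
        rw [if_neg hjk]
        linarith
    · rw [hbv, hGsub1, hGsmul1, hgWuv]
      have h1 := keyzv j (v k)
      rw [hbvv, hGzero1] at h1
      linarith
    · rw [hbz, hGsub1, hGsmul1, hgWuz]
      have h1 := keyzv j z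
      rw [hbvz, hGzero1] at h1
      linarith
  intro a c hUne
  set U : H := ∑ i, (a i • u i + c i • v i) with hUdef
  -- bracket facts with U
  have hbUz2 : bracket U z = 0 := by
    rw [hUdef]
    simp [map_sum, LinearMap.sum_apply, map_add, LinearMap.add_apply, map_smul,
      LinearMap.smul_apply, hbuz, hbvz]
  have hbuU : ∀ k, bracket (u k) U = c k • z := by
    intro k
    rw [hUdef]
    simp [map_add, map_smul, hbuu, hbuv, smul_ite, Finset.sum_ite_eq]
  have hbvU : ∀ k, bracket (v k) U = -(a k • z) := by
    intro k
    rw [hUdef]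
    simp [map_add, map_smul, hbvv, hbvu, smul_ite, Finset.sum_ite_eq']
  -- ip values with U
  have hipuU : ∀ k, ip (u k) U = a k * sigma k := by
    intro k
    rw [hUdef]
    simp [map_add, map_smul, hipuu, hipuv, mul_ite, Finset.sum_ite_eq]
  have hipvU : ∀ k, ip (v k) U = c k * sigma k := by
    intro k
    rw [hUdef]
    simp [map_add, map_smul, hipvv, hipvu, mul_ite, Finset.sum_ite_eq]
  have hipzU : ip z U = 0 := by
    rw [hUdef]
    simp [map_add, map_smul, hipzu, hipzv]
  have hipWU : ip W U = 0 := by rw [hipW, hipzU, mul_zero]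
  have hipUU : ip U U = ∑ i, (a i^2 + c i^2) * sigma i := by
    nth_rewrite 1 [hUdef]
    simp only [map_sum, LinearMap.sum_apply, map_add, LinearMap.add_apply, map_smul,
      LinearMap.smul_apply, smul_eq_mul, hipuU, hipvU]
    exact Finset.sum_congr rfl (fun i _ => by ring)
  -- gW values with U
  have hgWuU : ∀ k, gW (u k) U = (1+xi) * (a k * sigma k) := by
    intro k; rw [hG, hipuU, hipWu]; ring
  have hgWvU : ∀ k, gW (v k) U = (1+xi) * (c k * sigma k) := by
    intro k; rw [hG, hipvU, hipWv]; ring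
  have hgWUU : gW U U = (1+xi) * ∑ i, (a i^2 + c i^2) * sigma i := by
    rw [hG, hipUU, hipWU]; ring
  have hgWUW : gW U W = 0 := by
    rw [hG, hipsymm U W, hipWU]; ring
  have hgWzU : gW z U = 0 := by
    rw [hG, hipzU, hipWU]; ring
  -- Koszul for nablaW U z
  have keyU : ∀ X : H, 2 * gW (nablaW U z) X = gW (bracket X U) z := by
    intro X
    have h := hKoszulW U z X
    rw [hbUz2, hbz0 X] at h
    simp only [hGzero1] at h
    linarith
  set T : H := ∑ i, ((c i / sigma i) • u i - (a i / sigma i) • v i) with hTdef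
  have hgWTu : ∀ k, gW T (u k) = (1+xi) * c k := by
    intro k
    rw [hTdef, hGsum1]
    have h1 : ∀ i ∈ Finset.univ, gW ((c i / sigma i) • u i - (a i / sigma i) • v i) (u k)
        = if i = k then (1+xi) * c i else 0 := by
      intro i _
      rw [hGsub1, hGsmul1, hGsmul1, hgWuu, hgWvu]
      by_cases h : i = k
      · subst h
        rw [if_pos rfl, if_pos rfl]
        have hσ' : sigma i ≠ 0 := ne_of_gt (hsigma i)
        field_simp
        ring
      · rw [if_neg h, if_neg h]; ring
    rw [Finset.sum_congr rfl h1, Finset.sum_ite_eq']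
    simp
  have hgWTv : ∀ k, gW T (v k) = -((1+xi) * a k) := by
    intro k
    rw [hTdef, hGsum1]
    have h1 : ∀ i ∈ Finset.univ, gW ((c i / sigma i) • u i - (a i / sigma i) • v i) (v k)
        = if i = k then -((1+xi) * a i) else 0 := by
      intro i _
      rw [hGsub1, hGsmul1, hGsmul1, hgWvv, hgWuv]
      by_cases h : i = k
      · subst h
        rw [if_pos rfl, if_pos rfl]
        have hσ' : sigma i ≠ 0 := ne_of_gt (hsigma i)
        field_simp
        ring
      · rw [if_neg h, if_neg h]; ring
    rw [Finset.sum_congr rfl h1, Finset.sum_ite_eq']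
    simp
  have hgWTz : gW T z = 0 := by
    rw [hTdef, hGsum1]
    apply Finset.sum_eq_zero
    intro i _
    rw [hGsub1, hGsmul1, hGsmul1, hgWuz, hgWvz]
    ring
  -- nablaW U z
  have hnUz : nablaW U z = (((1+xi)*lam)/2) • T := by
    apply sub_eq_zero.mp
    apply hGzero
    rintro (k | k | ⟨⟩)
    · rw [hbu, hGsub1, hGsmul1, hgWTu]
      have h1 := keyU (u k)
      rw [hbuU, hGsmul1, hgWzz] at h1
      linear_combination h1 / 2
    · rw [hbv, hGsub1, hGsmul1, hgWTv]
      have h1 := keyU (v k)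
      rw [hbvU, hGneg1, hGsmul1, hgWzz] at h1
      linear_combination h1 / 2
    · rw [hbz, hGsub1, hGsmul1, hgWTz]
      have h1 := keyU z
      rw [hbz0 U, hGzero1] at h1
      linarith
  -- assemble RW
  have hnUW : nablaW U W = ((1/sq) * (((1+xi)*lam)/2)) • T := by
    rw [hW, map_smul, hnUz, smul_smul]
  have hnW : ∀ Y : H, nablaW W Y = (1/sq) • nablaW z Y := by
    intro Y
    rw [hW]
    simp only [map_smul, LinearMap.smul_apply]
  have hnzT : nablaW z T = ∑ i, ((c i / sigma i) • ((-(((1+xi)*lam)/(2*sigma i))) • v i)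
      - (a i / sigma i) • ((((1+xi)*lam)/(2*sigma i)) • u i)) := by
    rw [hTdef, map_sum]
    exact Finset.sum_congr rfl (fun i _ => by rw [map_sub, map_smul, map_smul, hnzu, hnzv])
  have hgWnzTU : gW (nablaW z T) U = -(((1+xi)^2*lam/2) * ∑ i, (a i^2 + c i^2)/sigma i) := by
    rw [hnzT, hGsum1]
    have h1 : ∀ i ∈ Finset.univ, gW ((c i / sigma i) • ((-(((1+xi)*lam)/(2*sigma i))) • v i)
        - (a i / sigma i) • ((((1+xi)*lam)/(2*sigma i)) • u i)) U
        = -(((1+xi)^2*lam/2) * ((a i^2 + c i^2)/sigma i)) := by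
      intro i _
      rw [hGsub1, hGsmul1, hGsmul1, hGsmul1, hGsmul1, hgWvU, hgWuU]
      have hσ' : sigma i ≠ 0 := ne_of_gt (hsigma i)
      field_simp
      ring
    rw [Finset.sum_congr rfl h1, Finset.sum_neg_distrib, ← Finset.mul_sum]
  have hnum : gW (RW U W W) U = ((1+xi)^3*lam/4) * ∑ i, (a i^2 + c i^2)/sigma i := by
    rw [hRW]
    rw [hnWW, map_zero, hbW2 U]
    simp only [map_zero, LinearMap.zero_apply]
    rw [hnUW, hnW, map_smul, smul_smul]
    rw [hGsub1, hGsub1, hGzero1, hGsmul1, hgWnzTU]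
    have h2 : (1:ℝ)/sq * ((1/sq) * (((1+xi)*lam)/2)) = ((1+xi)/2) := by
      have h3 : (1:ℝ)/sq * ((1/sq) * (((1+xi)*lam)/2)) = ((1+xi) * lam) / (2 * (sq*sq)) := by
        ring
      rw [h3, hsq2]
      have hlne : lam ≠ 0 := ne_of_gt hlam
      field_simp <;> ring
    rw [h2]
    ring
  -- positivity
  have hex : ∃ i, a i ≠ 0 ∨ c i ≠ 0 := by
    by_contra h
    push_neg at h
    apply hUne
    rw [hUdef]
    exact Finset.sum_eq_zero (fun i _ => by rw [(h i).1, (h i).2, zero_smul, zero_smul, add_zero])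
  obtain ⟨i0, hi0⟩ := hex
  have hterm : 0 < a i0^2 + c i0^2 := by
    rcases hi0 with h | h
    · have h2 : 0 < a i0 ^ 2 := lt_of_le_of_ne (sq_nonneg _) (Ne.symm (pow_ne_zero 2 h))
      nlinarith [sq_nonneg (c i0)]
    · have h2 : 0 < c i0 ^ 2 := lt_of_le_of_ne (sq_nonneg _) (Ne.symm (pow_ne_zero 2 h))
      nlinarith [sq_nonneg (a i0)]
  have hP1 : 0 < ∑ i, (a i^2 + c i^2) * sigma i :=
    Finset.sum_pos' (fun i _ => mul_nonneg (by positivity) (hsigma i).le)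
      ⟨i0, Finset.mem_univ i0, mul_pos hterm (hsigma i0)⟩
  have hP2 : 0 < ∑ i, (a i^2 + c i^2) / sigma i :=
    Finset.sum_pos' (fun i _ => div_nonneg (by positivity) (hsigma i).le)
      ⟨i0, Finset.mem_univ i0, div_pos hterm (hsigma i0)⟩
  rw [hnum, hgWWz, hgWUU, hgWUW]
  have hd : ((1+xi)^2 * ((1+xi) * ∑ i, (a i^2 + c i^2) * sigma i) - 0^2)
      = (1+xi)^3 * ∑ i, (a i^2 + c i^2) * sigma i := by ring
  rw [hd]
  apply div_pos
  · exact mul_pos (div_pos (mul_pos (pow_pos hxip 3) hlam) (by norm_num)) hP2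
  · exact mul_pos (pow_pos hxip 3) hP1
end

section
/- For each 1 ≤ i ≤ n, the sectional curvature of the plane spanned by u_i and v_i equals ⟨R(u_i, v_i)v_i, u_i⟩ / (⟨u_i,u_i⟩⟨v_i,v_i⟩ − ⟨u_i,v_i⟩²) = −3λ/(4σ_i²); in particular, the left-invariant metric on the Heisenberg group H_{2n+1} admits planes of strictly negative sectional curvature. -/
set_option maxHeartbeats 2000000

theorem stmt_16
    {H : Type*} [AddCommGroup H] [Module ℝ H]
    (n : ℕ) (hn : 1 ≤ n)
    (u v : Fin n → H) (z : H)
    (b : Module.Basis (Fin n ⊕ Fin n ⊕ Unit) ℝ H)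
    (hbu : ∀ i, b (Sum.inl i) = u i)
    (hbv : ∀ i, b (Sum.inr (Sum.inl i)) = v i)
    (hbz : b (Sum.inr (Sum.inr ())) = z)
    (bracket : H →ₗ[ℝ] H →ₗ[ℝ] H)
    (hbskew : ∀ X Y : H, bracket X Y = - bracket Y X)
    (hbuv : ∀ i j, bracket (u i) (v j) = if i = j then z else 0)
    (hbuu : ∀ i j, bracket (u i) (u j) = 0)
    (hbvv : ∀ i j, bracket (v i) (v j) = 0)
    (hbuz : ∀ i, bracket (u i) z = 0)
    (hbvz : ∀ i, bracket (v i) z = 0)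
    (lam : ℝ) (hlam : 0 < lam)
    (sigma : Fin n → ℝ) (hsigma : ∀ i, 0 < sigma i)
    (ip : H →ₗ[ℝ] H →ₗ[ℝ] ℝ)
    (hipsymm : ∀ X Y : H, ip X Y = ip Y X)
    (hippos : ∀ X : H, X ≠ 0 → 0 < ip X X)
    (hipuu : ∀ i j, ip (u i) (u j) = if i = j then sigma i else 0)
    (hipvv : ∀ i j, ip (v i) (v j) = if i = j then sigma i else 0)
    (hipuv : ∀ i j, ip (u i) (v j) = 0)
    (hipuz : ∀ i, ip (u i) z = 0)
    (hipvz : ∀ i, ip (v i) z = 0)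
    (hipzz : ip z z = lam)
    (nabla : H →ₗ[ℝ] H →ₗ[ℝ] H)
    (hKoszul : ∀ U V X : H, 2 * ip (nabla U V) X =
      ip (bracket U V) X - ip (bracket V X) U + ip (bracket X U) V)
    (R : H → H → H → H)
    (hR : ∀ U V X : H, R U V X =
      nabla U (nabla V X) - nabla V (nabla U X) - nabla (bracket U V) X)
    :
    ∀ i : Fin n,
      ip (R (u i) (v i) (v i)) (u i) /
        (ip (u i) (u i) * ip (v i) (v i) - (ip (u i) (v i)) ^ 2) =
        -(3 * lam) / (4 * (sigma i) ^ 2) ∧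
      -(3 * lam) / (4 * (sigma i) ^ 2) < 0 := by
  intro i
  have hspos := hsigma i
  have hsne : sigma i ≠ 0 := ne_of_gt hspos
  -- derived bracket lemmas
  have hbvu : ∀ j k, bracket (v j) (u k) = if k = j then -z else 0 := by
    intro j k
    rw [hbskew, hbuv]
    by_cases h : k = j <;> simp [h]
  have hbzu : ∀ j, bracket z (u j) = 0 := by
    intro j; rw [hbskew, hbuz, neg_zero]
  have hbzv : ∀ j, bracket z (v j) = 0 := by
    intro j; rw [hbskew, hbvz, neg_zero]
  have hbzz : bracket z z = 0 := by
    have h := hbskew z z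
    have h2 : (2 : ℝ) • bracket z z = 0 := by
      rw [two_smul]; nth_rewrite 1 [h]; simp
    simpa using (smul_eq_zero.mp h2).resolve_left (by norm_num)
  -- derived ip lemmas
  have hipvu : ∀ j k, ip (v j) (u k) = 0 := fun j k => by rw [hipsymm, hipuv]
  have hipzu : ∀ j, ip z (u j) = 0 := fun j => by rw [hipsymm, hipuz]
  have hipzv : ∀ j, ip z (v j) = 0 := fun j => by rw [hipsymm, hipvz]
  -- positive definiteness: vanishing against all basis vectors forces zero
  have hzero : ∀ X : H, (∀ k, ip X (b k) = 0) → X = 0 := by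
    intro X hX
    by_contra hne
    have hpos := hippos X hne
    have hXX : ip X X = 0 := by
      have e : ip X X = ip X (∑ k, b.repr X k • b k) :=
        congrArg (ip X) (b.sum_repr X).symm
      rw [e, map_sum]
      simp [hX]
    linarith
  have hchar : ∀ N w : H, (∀ j, ip N (u j) = ip w (u j)) →
      (∀ j, ip N (v j) = ip w (v j)) → (ip N z = ip w z) → N = w := by
    intro N w h1 h2 h3
    have : N - w = 0 := by
      apply hzero
      rintro (j | j | ⟨⟩) <;>
        simp [hbu, hbv, hbz, map_sub, LinearMap.sub_apply, h1, h2, h3]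
    exact sub_eq_zero.mp this
  -- ∇_{v_i} v_i = 0
  have hN1 : nabla (v i) (v i) = 0 := by
    apply hchar
    · intro j
      have h := hKoszul (v i) (v i) (u j)
      rcases eq_or_ne i j with hij | hij
      · subst hij
        simp [hbuv, hbuu, hbvv, hbuz, hbvz, hbvu, hbzu, hbzv, hbzz, hipuu, hipvv, hipuv, hipuz, hipvz, hipzz, hipvu, hipzu, hipzv] at h ⊢
        linarith
      · simp [hij, hij.symm, hbuv, hbuu, hbvv, hbuz, hbvz, hbvu, hbzu, hbzv, hbzz, hipuu, hipvv, hipuv, hipuz, hipvz, hipzz, hipvu, hipzu, hipzv] at h ⊢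
        linarith
    · intro j
      have h := hKoszul (v i) (v i) (v j)
      simp [hbuv, hbuu, hbvv, hbuz, hbvz, hbvu, hbzu, hbzv, hbzz, hipuu, hipvv, hipuv, hipuz, hipvz, hipzz, hipvu, hipzu, hipzv] at h ⊢
      linarith
    · have h := hKoszul (v i) (v i) z
      simp [hbuv, hbuu, hbvv, hbuz, hbvz, hbvu, hbzu, hbzv, hbzz, hipuu, hipvv, hipuv, hipuz, hipvz, hipzz, hipvu, hipzu, hipzv] at h ⊢
      linarith
  -- ∇_{u_i} v_i = z/2
  have hN2 : nabla (u i) (v i) = (1/2 : ℝ) • z := by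
    apply hchar
    · intro j
      have h := hKoszul (u i) (v i) (u j)
      rcases eq_or_ne i j with hij | hij
      · subst hij
        simp [hbuv, hbuu, hbvv, hbuz, hbvz, hbvu, hbzu, hbzv, hbzz, hipuu, hipvv, hipuv, hipuz, hipvz, hipzz, hipvu, hipzu, hipzv] at h ⊢
        linarith
      · simp [hij, hij.symm, hbuv, hbuu, hbvv, hbuz, hbvz, hbvu, hbzu, hbzv, hbzz, hipuu, hipvv, hipuv, hipuz, hipvz, hipzz, hipvu, hipzu, hipzv] at h ⊢
        linarith
    · intro j
      have h := hKoszul (u i) (v i) (v j)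
      rcases eq_or_ne i j with hij | hij
      · subst hij
        simp [hbuv, hbuu, hbvv, hbuz, hbvz, hbvu, hbzu, hbzv, hbzz, hipuu, hipvv, hipuv, hipuz, hipvz, hipzz, hipvu, hipzu, hipzv] at h ⊢
        linarith
      · simp [hij, hij.symm, hbuv, hbuu, hbvv, hbuz, hbvz, hbvu, hbzu, hbzv, hbzz, hipuu, hipvv, hipuv, hipuz, hipvz, hipzz, hipvu, hipzu, hipzv] at h ⊢
        linarith
    · have h := hKoszul (u i) (v i) z
      simp [hbuv, hbuu, hbvv, hbuz, hbvz, hbvu, hbzu, hbzv, hbzz, hipuu, hipvv, hipuv, hipuz, hipvz, hipzz, hipvu, hipzu, hipzv] at h ⊢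
      linarith
  -- ∇_{v_i} z = (lam/(2σ)) u_i
  have hN3 : nabla (v i) z = (lam / (2 * sigma i)) • u i := by
    apply hchar
    · intro j
      have h := hKoszul (v i) z (u j)
      rcases eq_or_ne i j with hij | hij
      · subst hij
        simp [hbuv, hbuu, hbvv, hbuz, hbvz, hbvu, hbzu, hbzv, hbzz, hipuu, hipvv, hipuv, hipuz, hipvz, hipzz, hipvu, hipzu, hipzv] at h ⊢
        have e : lam / (2 * sigma i) * sigma i = lam / 2 := by
          field_simp
        rw [e]; linarith
      · simp [hij, hij.symm, hbuv, hbuu, hbvv, hbuz, hbvz, hbvu, hbzu, hbzv, hbzz, hipuu, hipvv, hipuv, hipuz, hipvz, hipzz, hipvu, hipzu, hipzv] at h ⊢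
        linarith
    · intro j
      have h := hKoszul (v i) z (v j)
      simp [hbuv, hbuu, hbvv, hbuz, hbvz, hbvu, hbzu, hbzv, hbzz, hipuu, hipvv, hipuv, hipuz, hipvz, hipzz, hipvu, hipzu, hipzv] at h ⊢
      linarith
    · have h := hKoszul (v i) z z
      simp [hbuv, hbuu, hbvv, hbuz, hbvz, hbvu, hbzu, hbzv, hbzz, hipuu, hipvv, hipuv, hipuz, hipvz, hipzz, hipvu, hipzu, hipzv] at h ⊢
      linarith
  -- ∇_{z} v_i = (lam/(2σ)) u_i
  have hN4 : nabla z (v i) = (lam / (2 * sigma i)) • u i := by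
    apply hchar
    · intro j
      have h := hKoszul z (v i) (u j)
      rcases eq_or_ne i j with hij | hij
      · subst hij
        simp [hbuv, hbuu, hbvv, hbuz, hbvz, hbvu, hbzu, hbzv, hbzz, hipuu, hipvv, hipuv, hipuz, hipvz, hipzz, hipvu, hipzu, hipzv] at h ⊢
        have e : lam / (2 * sigma i) * sigma i = lam / 2 := by
          field_simp
        rw [e]; linarith
      · simp [hij, hij.symm, hbuv, hbuu, hbvv, hbuz, hbvz, hbvu, hbzu, hbzv, hbzz, hipuu, hipvv, hipuv, hipuz, hipvz, hipzz, hipvu, hipzu, hipzv] at h ⊢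
        linarith
    · intro j
      have h := hKoszul z (v i) (v j)
      simp [hbuv, hbuu, hbvv, hbuz, hbvz, hbvu, hbzu, hbzv, hbzz, hipuu, hipvv, hipuv, hipuz, hipvz, hipzz, hipvu, hipzu, hipzv] at h ⊢
      linarith
    · have h := hKoszul z (v i) z
      simp [hbuv, hbuu, hbvv, hbuz, hbvz, hbvu, hbzu, hbzv, hbzz, hipuu, hipvv, hipuv, hipuz, hipvz, hipzz, hipvu, hipzu, hipzv] at h ⊢
      linarith
  have hbr : bracket (u i) (v i) = z := by simp [hbuv]
  have hRval : R (u i) (v i) (v i) = (-(3 * lam / (4 * sigma i))) • u i := by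
    rw [hR, hN1, hN2, hbr, map_zero, map_smul, hN3, hN4, smul_smul]
    rw [zero_sub, sub_eq_add_neg, ← neg_smul, ← neg_smul, ← add_smul]
    congr 1
    field_simp
    ring
  constructor
  · rw [hRval, map_smul]
    simp [hipuu, hipvv, hipuv]
    field_simp
  · have h4 : (0:ℝ) < 4 * sigma i ^ 2 := by positivity
    apply div_neg_of_neg_of_pos _ h4
    linarith
end

section
/- For each 1 ≤ i ≤ n, the sectional curvature of the plane spanned by u_i and z equals ⟨R(u_i, z)z, u_i⟩ / (⟨u_i,u_i⟩⟨z,z⟩ − ⟨u_i,z⟩²) = λ/(4σ_i²); in particular, the left-invariant metric on the Heisenberg group H_{2n+1} admits planes of strictly positive sectional curvature. -/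
theorem stmt_17
    {H : Type*} [AddCommGroup H] [Module ℝ H]
    (n : ℕ) (hn : 1 ≤ n)
    (u v : Fin n → H) (z : H)
    (b : Module.Basis (Fin n ⊕ Fin n ⊕ Unit) ℝ H)
    (hbu : ∀ i, b (Sum.inl i) = u i)
    (hbv : ∀ i, b (Sum.inr (Sum.inl i)) = v i)
    (hbz : b (Sum.inr (Sum.inr ())) = z)
    (bracket : H →ₗ[ℝ] H →ₗ[ℝ] H)
    (hbskew : ∀ X Y : H, bracket X Y = - bracket Y X)
    (hbuv : ∀ i j, bracket (u i) (v j) = if i = j then z else 0)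
    (hbuu : ∀ i j, bracket (u i) (u j) = 0)
    (hbvv : ∀ i j, bracket (v i) (v j) = 0)
    (hbuz : ∀ i, bracket (u i) z = 0)
    (hbvz : ∀ i, bracket (v i) z = 0)
    (lam : ℝ) (hlam : 0 < lam)
    (sigma : Fin n → ℝ) (hsigma : ∀ i, 0 < sigma i)
    (ip : H →ₗ[ℝ] H →ₗ[ℝ] ℝ)
    (hipsymm : ∀ X Y : H, ip X Y = ip Y X)
    (hippos : ∀ X : H, X ≠ 0 → 0 < ip X X)
    (hipuu : ∀ i j, ip (u i) (u j) = if i = j then sigma i else 0)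
    (hipvv : ∀ i j, ip (v i) (v j) = if i = j then sigma i else 0)
    (hipuv : ∀ i j, ip (u i) (v j) = 0)
    (hipuz : ∀ i, ip (u i) z = 0)
    (hipvz : ∀ i, ip (v i) z = 0)
    (hipzz : ip z z = lam)
    (nabla : H →ₗ[ℝ] H →ₗ[ℝ] H)
    (hKoszul : ∀ U V X : H, 2 * ip (nabla U V) X =
      ip (bracket U V) X - ip (bracket V X) U + ip (bracket X U) V)
    (R : H → H → H → H)
    (hR : ∀ U V X : H, R U V X =
      nabla U (nabla V X) - nabla V (nabla U X) - nabla (bracket U V) X)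
    :
    ∀ i : Fin n,
      ip (R (u i) z z) (u i) /
        (ip (u i) (u i) * ip z z - (ip (u i) z) ^ 2) =
        lam / (4 * (sigma i) ^ 2) ∧
      0 < lam / (4 * (sigma i) ^ 2) := by
  intro i
  have hσ := hsigma i
  have hσne : sigma i ≠ 0 := ne_of_gt hσ
  have hlne : lam ≠ 0 := ne_of_gt hlam
  have hbz' : ∀ t : Unit, b (Sum.inr (Sum.inr t)) = z := fun _ => hbz
  -- nondegeneracy
  have key : ∀ Y : H, (∀ j, ip Y (b j) = 0) → Y = 0 := by
    intro Y hY
    by_contra h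
    have hpos := hippos Y h
    have hz : ip Y = 0 := b.ext (fun j => by simpa using hY j)
    rw [hz] at hpos
    simp at hpos
  -- symmetric versions
  have hipvu : ∀ k l, ip (v k) (u l) = 0 := fun k l => by rw [hipsymm]; exact hipuv l k
  have hipzu : ∀ k, ip z (u k) = 0 := fun k => by rw [hipsymm]; exact hipuz k
  have hipzv : ∀ k, ip z (v k) = 0 := fun k => by rw [hipsymm]; exact hipvz k
  -- brackets with z vanish
  have hzz : bracket z z = 0 := by
    have h := hbskew z z
    have h1 : bracket z z + bracket z z = 0 := by nth_rewrite 1 [h]; abel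
    have h2 : (2 : ℝ) • bracket z z = 0 := by rw [two_smul]; exact h1
    rcases smul_eq_zero.mp h2 with h3 | h3
    · norm_num at h3
    · exact h3
  have hzu : ∀ k, bracket z (u k) = 0 := fun k => by rw [hbskew, hbuz, neg_zero]
  have hzv : ∀ k, bracket z (v k) = 0 := fun k => by rw [hbskew, hbvz, neg_zero]
  have hvu : ∀ k l, bracket (v k) (u l) = -(if l = k then z else 0) := fun k l => by
    rw [hbskew, hbuv]
  have hzX : ∀ X : H, bracket z X = 0 := by
    have hb0 : bracket z = 0 := b.ext (fun j => by
      rcases j with k | k | t <;>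
        simp [hbu, hbv, hbz', hzu, hzv, hzz])
    intro X; rw [hb0]; rfl
  -- nabla z z = 0
  have hnzz : nabla z z = 0 := by
    apply key
    intro j
    have hK := hKoszul z z (b j)
    rw [hzz, hzX, hbskew (b j) z, hzX] at hK
    simp at hK
    linarith [hK]
  set c : ℝ := lam / (2 * sigma i) with hc
  -- nabla (u i) z = -c • v i
  have hnuz : nabla (u i) z = (-c) • v i := by
    have h0 : nabla (u i) z - (-c) • v i = 0 := by
      apply key
      rintro (k | k | t)
      · rw [hbu]
        have hK := hKoszul (u i) z (u k)
        rw [hbuz, hzu, hbuu] at hK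
        simp at hK
        simp [map_sub, map_smul, hK, hipvu]
      · rw [hbv]
        have hK := hKoszul (u i) z (v k)
        rw [hbuz, hzv, hvu] at hK
        rcases eq_or_ne i k with h | h
        · rw [← h] at hK ⊢
          simp [hipzz] at hK
          have hN : ip (nabla (u i) z) (v i) = -lam / 2 := by linarith
          simp [map_sub, map_smul, hN, hipvv, hc]
          field_simp
          ring
        · simp [h, Ne.symm h] at hK
          simp [map_sub, map_smul, hK, hipvv, h, Ne.symm h]
      · rw [hbz']
        have hK := hKoszul (u i) z z
        rw [hbuz, hzz, hzu] at hK
        simp at hK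
        simp [map_sub, map_smul, hK, hipvz]
    exact sub_eq_zero.mp h0
  -- nabla z (v i) = c • u i
  have hnzv : nabla z (v i) = c • u i := by
    have h0 : nabla z (v i) - c • u i = 0 := by
      apply key
      rintro (k | k | t)
      · rw [hbu]
        have hK := hKoszul z (v i) (u k)
        rw [hzv, hvu, hbuz] at hK
        rcases eq_or_ne k i with h | h
        · rw [h] at hK ⊢
          simp [hipzz] at hK
          have hN : ip (nabla z (v i)) (u i) = lam / 2 := by linarith
          simp [map_sub, map_smul, hN, hipuu, hc]
          field_simp
          ring
        · simp [h] at hK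
          simp [map_sub, map_smul, hK, hipuu, h, Ne.symm h]
      · rw [hbv]
        have hK := hKoszul z (v i) (v k)
        rw [hzv, hbvv, hbvz] at hK
        simp at hK
        simp [map_sub, map_smul, hK, hipuv]
      · rw [hbz']
        have hK := hKoszul z (v i) z
        rw [hzv, hbvz, hzz] at hK
        simp at hK
        simp [map_sub, map_smul, hK, hipuz]
    exact sub_eq_zero.mp h0
  -- compute R
  have hRval : R (u i) z z = (c * c) • u i := by
    rw [hR, hnzz, hnuz, hbuz]
    simp [hnzv, smul_smul]
  rw [hRval]
  have hnum : ip ((c * c) • u i) (u i) = c * c * sigma i := by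
    simp [map_smul, hipuu]
  constructor
  · rw [hnum, hipuu, hipuz, hipzz]
    simp [hc]
    field_simp
    ring
  · positivity
end
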